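/- arXiv:2304.03860 — 2 statements merged into one kernel-verified Lean document; each statement's English description precedes it below -/
import Mathlib

section
/- Let F be a surjective cellular automaton with at least one equicontinuity point. Then the set of F-periodic points (points y with F^p(y) = y for some p > 0) is dense in A^ℤ. -/
open Function Set

/-- The configuration space `A^ℤ`. -/
abbrev Config (A : Type*) : Type _ := ℤ → A

/-- The shift map `σ(x)_i = x_{i+1}`. -/
def shift {A : Type*} (x : Config A) : Config A := fun i => x (i + 1)

/-- A cellular automaton: a continuous self-map of `A^ℤ` commuting with the shift. -/
def IsCA {A : Type*} [TopologicalSpace A] (F : Config A → Config A) : Prop :=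
  Continuous F ∧ F ∘ shift = shift ∘ F

/-- `x` is an equicontinuity point of `F`. -/
def EquicontinuousPt {A : Type*} (F : Config A → Config A) (x : Config A) : Prop :=
  ∀ m : ℕ, ∃ n : ℕ, ∀ y : Config A,
    (∀ k : ℤ, -(n : ℤ) ≤ k → k ≤ (n : ℤ) → y k = x k) →
    ∀ (t : ℕ) (k : ℤ), -(m : ℤ) ≤ k → k ≤ (m : ℤ) → F^[t] y k = F^[t] x k

set_option maxHeartbeats 1000000
open scoped Classical
set_option linter.unusedSectionVars false

namespace CAWork

variable {A : Type} [Fintype A] [Nonempty A]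

noncomputable def defA : A := Classical.arbitrary A

def shiftZ (c : ℤ) (y : Config A) : Config A := fun i => y (i + c)

lemma shiftZ_shiftZ (c d : ℤ) (y : Config A) :
    shiftZ c (shiftZ d y) = shiftZ (c + d) y := by
  funext i; simp [shiftZ, add_assoc]

lemma shiftZ_zero (y : Config A) : shiftZ 0 y = y := by funext i; simp [shiftZ]

lemma commZ (F : Config A → Config A) (h1 : F ∘ shift = shift ∘ F) :
    ∀ (c : ℤ) (y : Config A), F (shiftZ c y) = shiftZ c (F y) := by
  have hs : ∀ y : Config A, F (shiftZ 1 y) = shiftZ 1 (F y) := by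
    intro y
    have := congrFun h1 y
    exact this
  have hneg : ∀ y : Config A, F (shiftZ (-1) y) = shiftZ (-1) (F y) := by
    intro y
    have h2 := hs (shiftZ (-1) y)
    rw [shiftZ_shiftZ] at h2
    norm_num at h2
    rw [shiftZ_zero] at h2
    have h3 := congrArg (shiftZ (-1)) h2
    rw [shiftZ_shiftZ] at h3
    norm_num at h3
    rw [shiftZ_zero] at h3
    exact h3.symm
  intro c
  induction c using Int.induction_on with
  | zero => intro y; rw [shiftZ_zero, shiftZ_zero]
  | succ k ih =>
      intro y
      have e1 : shiftZ ((k : ℤ) + 1) y = shiftZ (k : ℤ) (shiftZ 1 y) := by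
        rw [shiftZ_shiftZ]
      rw [e1, ih, hs, shiftZ_shiftZ]
  | pred k ih =>
      intro y
      have e1 : shiftZ (-(k : ℤ) - 1) y = shiftZ (-(k : ℤ)) (shiftZ (-1) y) := by
        rw [shiftZ_shiftZ]; ring_nf
      rw [e1, ih, hneg, shiftZ_shiftZ]
      congr 1

lemma iter_commZ (F : Config A → Config A) (h1 : F ∘ shift = shift ∘ F) (t : ℕ) :
    ∀ (c : ℤ) (y : Config A), F^[t] (shiftZ c y) = shiftZ c (F^[t] y) := by
  induction t with
  | zero => intro c y; simp
  | succ k ih =>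
      intro c y
      rw [Function.iterate_succ_apply', Function.iterate_succ_apply', ih, commZ F h1]

section Radius
variable [TopologicalSpace A] [DiscreteTopology A]

lemma exists_radius0 (g : Config A → A) (hg : Continuous g) :
    ∃ R : ℕ, ∀ y z : Config A,
      (∀ i : ℤ, -(R:ℤ) ≤ i ∧ i ≤ R → y i = z i) → g y = g z := by
  classical
  have key : ∀ x : Config A, ∃ s : Finset ℤ,
      ∀ y : Config A, (∀ i ∈ s, y i = x i) → g y = g x := by
    intro x
    have hopen : IsOpen (g ⁻¹' {g x}) := (isOpen_discrete _).preimage hg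
    rw [isOpen_pi_iff] at hopen
    obtain ⟨I, u, hIu, hsub⟩ := hopen x rfl
    refine ⟨I, fun y hy => ?_⟩
    have : y ∈ (I : Set ℤ).pi u := by
      intro i hi
      rw [hy i hi]
      exact (hIu i hi).2
    exact hsub this
  choose s hs using key
  have hUopen : ∀ x : Config A, IsOpen ((↑(s x) : Set ℤ).pi (fun i => ({x i} : Set A))) := by
    intro x
    exact isOpen_set_pi (Finset.finite_toSet _) (fun i _ => isOpen_discrete _)
  have hcover : (Set.univ : Set (Config A)) ⊆
      ⋃ x : Config A, (↑(s x) : Set ℤ).pi (fun i => ({x i} : Set A)) := by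
    intro y _
    exact Set.mem_iUnion.2 ⟨y, fun i _ => rfl⟩
  obtain ⟨t, ht⟩ := isCompact_univ.elim_finite_subcover _ hUopen hcover
  set S : Finset ℤ := t.sup s with hS
  refine ⟨S.sup Int.natAbs, fun y z hyz => ?_⟩
  have hy := ht (Set.mem_univ y)
  simp only [Set.mem_iUnion] at hy
  obtain ⟨x, hxt, hyx⟩ := hy
  have hyx' : ∀ i ∈ s x, y i = x i := fun i hi => hyx i hi
  have hzx' : ∀ i ∈ s x, z i = x i := by
    intro i hi
    have hiS : i ∈ S := Finset.mem_of_subset (Finset.le_sup hxt) hi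
    have habs : i.natAbs ≤ S.sup Int.natAbs := Finset.le_sup hiS
    rw [← hyz i (by omega)]
    exact hyx' i hi
  rw [hs x y hyx', hs x z hzx']

lemma exists_radius (F : Config A → Config A) (hc : Continuous F)
    (hcm : ∀ (c : ℤ) (y : Config A), F (shiftZ c y) = shiftZ c (F y)) :
    ∃ R : ℕ, ∀ (y z : Config A) (j : ℤ),
      (∀ i : ℤ, j - (R:ℤ) ≤ i ∧ i ≤ j + R → y i = z i) → F y j = F z j := by
  have hg : Continuous (fun y : Config A => F y 0) := (continuous_apply (0:ℤ)).comp hc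
  obtain ⟨R, hR⟩ := exists_radius0 _ hg
  refine ⟨R, fun y z j hagree => ?_⟩
  have h1 : ∀ w : Config A, F (shiftZ j w) 0 = F w j := by
    intro w; rw [hcm]; show F w (0 + j) = F w j; rw [zero_add]
  rw [← h1 y, ← h1 z]
  apply hR
  intro i hi
  show y (i + j) = z (i + j)
  exact hagree (i + j) ⟨by omega, by omega⟩

end Radius



/-- lower bound binomial -/
lemma binom_lower (a : ℕ) : ∀ m : ℕ, a ^ (m+1) + (m+1) * a ^ m ≤ (a + 1) ^ (m+1) := by
  intro m
  induction m with
  | zero => norm_num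
  | succ k ih =>
      have h := Nat.mul_le_mul_right (a + 1) ih
      have e : (a ^ (k+1) + (k+1) * a ^ k) * (a+1)
          = a ^ (k+2) + (k+2) * a ^ (k+1) + (k+1) * a ^ k := by ring
      calc a ^ (k+2) + (k+2) * a ^ (k+1)
          ≤ a ^ (k+2) + (k+2) * a ^ (k+1) + (k+1) * a ^ k := Nat.le_add_right _ _
        _ = (a ^ (k+1) + (k+1) * a ^ k) * (a+1) := e.symm
        _ ≤ (a+1)^(k+1) * (a+1) := h
        _ = (a+1)^(k+2) := by rw [← pow_succ]

lemma need1 (C b N : ℕ) (hC : 1 ≤ C) (hb : 1 ≤ b) (hN : (C-1)*b < N) (hN1 : 1 ≤ N) :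
    C * b ^ N < (b+1) ^ N := by
  obtain ⟨c, rfl⟩ : ∃ c, C = c + 1 := ⟨C - 1, by omega⟩
  simp only [Nat.add_sub_cancel] at hN
  obtain ⟨m, rfl⟩ : ∃ m, N = m + 1 := ⟨N - 1, by omega⟩
  have hbin := binom_lower b m
  have hppos : 0 < b ^ m := pow_pos hb m
  have key : c * b ^ (m+1) < (m+1) * b ^ m := by
    have e : c * b ^ (m+1) = (c*b) * b ^ m := by rw [pow_succ]; ring
    rw [e]
    exact (Nat.mul_lt_mul_right hppos).mpr hN
  have e2 : (c+1) * b ^ (m+1) = b ^ (m+1) + c * b ^ (m+1) := by ring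
  omega

lemma need2 (K : ℕ) (hK : 1 ≤ K) : K ^ (K*K+2) < (K+1) ^ (K*K+1) := by
  have hbin := binom_lower K (K*K)
  have hp : 0 < K ^ (K*K) := pow_pos hK _
  have h1 : K ^ (K*K+2) < K ^ (K*K+1) + (K*K+1) * K ^ (K*K) := by
    have e1 : K ^ (K*K+2) = (K*K) * K ^ (K*K) := by ring
    have e2 : K ^ (K*K+1) = K * K ^ (K*K) := by ring
    rw [e1, e2]
    have hlt : K*K < K + (K*K+1) := by omega
    calc (K*K) * K ^ (K*K) < (K + (K*K+1)) * K ^ (K*K) := (Nat.mul_lt_mul_right hp).mpr hlt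
      _ = K * K ^ (K*K) + (K*K+1) * K ^ (K*K) := by ring
  exact lt_of_lt_of_le h1 hbin

section Moore

variable {A : Type} [Fintype A] [Nonempty A]
variable (D M : ℕ)

def blkw (Z : Fin ((M+1)*D) → A) (k : Fin (M+1)) (j : Fin D) : A :=
  Z ⟨(k:ℕ)*D + (j:ℕ), by
      refine lt_of_lt_of_le (Nat.add_lt_add_left j.isLt _) ?_
      have e : (k:ℕ)*D + D = ((k:ℕ)+1)*D := by ring
      rw [e]
      exact Nat.mul_le_mul_right _ (by have := k.isLt; omega)⟩

lemma divmod_block (hD0 : 0 < D) (k j : ℕ) (hj : j < D) :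
    (k*D + j)/D = k ∧ (k*D + j) % D = j := by
  constructor
  · rw [Nat.mul_comm, Nat.mul_add_div hD0]
    simp [Nat.div_eq_of_lt hj]
  · rw [Nat.mul_comm, Nat.mul_add_mod]
    exact Nat.mod_eq_of_lt hj

def fromBlocks (hD0 : 0 < D) (B : Fin (M+1) → Fin D → A) : Fin ((M+1)*D) → A :=
  fun i => B ⟨(i:ℕ)/D, (Nat.div_lt_iff_lt_mul hD0).mpr i.isLt⟩ ⟨(i:ℕ) % D, Nat.mod_lt _ hD0⟩

lemma blkw_fromBlocks (hD0 : 0 < D) (B : Fin (M+1) → Fin D → A) (k : Fin (M+1)) (j : Fin D) :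
    blkw D M (fromBlocks D M hD0 B) k j = B k j := by
  have hdm := divmod_block D hD0 (k:ℕ) (j:ℕ) j.isLt
  simp only [blkw, fromBlocks]
  congr 1
  · exact Fin.ext hdm.1
  · exact Fin.ext hdm.2

lemma fromBlocks_blkw (hD0 : 0 < D) (Z : Fin ((M+1)*D) → A) :
    fromBlocks D M hD0 (blkw D M Z) = Z := by
  funext i
  simp only [fromBlocks, blkw]
  congr 1
  refine Fin.ext ?_
  show ((i:ℕ)/D)*D + (i:ℕ)%D = (i:ℕ)
  rw [Nat.mul_comm]
  exact Nat.div_add_mod _ _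

noncomputable def cmps (v v' : Fin D → A) (hD0 : 0 < D) (Z : Fin ((M+1)*D) → A) :
    Fin ((M+1)*D) → A :=
  fromBlocks D M hD0 (fun k => if blkw D M Z k = v' then v else blkw D M Z k)

lemma blkw_cmps (v v' : Fin D → A) (hD0 : 0 < D) (Z : Fin ((M+1)*D) → A) (k : Fin (M+1)) :
    blkw D M (cmps D M v v' hD0 Z) k
      = if blkw D M Z k = v' then v else blkw D M Z k := by
  funext j
  show blkw D M (fromBlocks D M hD0 (fun k => if blkw D M Z k = v' then v else blkw D M Z k)) k j = _
  rw [blkw_fromBlocks]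

lemma blkw_cmps_ne (v v' : Fin D → A) (hvv : v ≠ v') (hD0 : 0 < D)
    (Z : Fin ((M+1)*D) → A) (k : Fin (M+1)) :
    blkw D M (cmps D M v v' hD0 Z) k ≠ v' := by
  rw [blkw_cmps]
  by_cases hc : blkw D M Z k = v'
  · rw [if_pos hc]; exact hvv
  · rw [if_neg hc]; exact hc

lemma moore_count (v v' : Fin D → A) (hD0 : 0 < D) (hvv : v ≠ v')
    {W : Type} [Fintype W] (psi : (Fin ((M+1)*D) → A) → W)
    (hsurj : Function.Surjective psi)
    (hinv : ∀ Z, psi (cmps D M v v' hD0 Z) = psi Z) :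
    Fintype.card W ≤ (Fintype.card A ^ D - 1) ^ (M+1) := by
  classical
  have h1 : Finset.univ.image (psi ∘ cmps D M v v' hD0)
      = (Finset.univ : Finset W) := by
    apply Finset.eq_univ_of_forall
    intro w
    obtain ⟨Z, hZ⟩ := hsurj w
    exact Finset.mem_image.mpr ⟨Z, Finset.mem_univ _, by show psi _ = w; rw [hinv]; exact hZ⟩
  have h2 : Fintype.card W
      ≤ (Finset.univ.image (cmps D M v v' hD0)).card := by
    calc Fintype.card W = (Finset.univ : Finset W).card := (Finset.card_univ).symm
      _ = ((Finset.univ.image (cmps D M v v' hD0)).image psi).card := by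
          rw [Finset.image_image, h1]
      _ ≤ (Finset.univ.image (cmps D M v v' hD0)).card := Finset.card_image_le
  have h3 : (Finset.univ.image (cmps D M v v' hD0)).card
      ≤ Fintype.card (Fin (M+1) → {f : Fin D → A // f ≠ v'}) := by
    rw [← Finset.card_univ]
    apply Finset.card_le_card_of_injOn
      (fun Z k => if h : blkw D M Z k ≠ v' then (⟨blkw D M Z k, h⟩ : {f : Fin D → A // f ≠ v'})
                  else ⟨v, hvv⟩)
      (fun _ _ => Finset.mem_univ _)
    intro Z1 hZ1 Z2 hZ2 heq
    obtain ⟨Y1, _, rfl⟩ := Finset.mem_image.mp hZ1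
    obtain ⟨Y2, _, rfl⟩ := Finset.mem_image.mp hZ2
    have hblocks : ∀ k, blkw D M (cmps D M v v' hD0 Y1) k = blkw D M (cmps D M v v' hD0 Y2) k := by
      intro k
      have hb1 := blkw_cmps_ne D M v v' hvv hD0 Y1 k
      have hb2 := blkw_cmps_ne D M v v' hvv hD0 Y2 k
      have this2 : (if h : blkw D M (cmps D M v v' hD0 Y1) k ≠ v'
            then (⟨blkw D M (cmps D M v v' hD0 Y1) k, h⟩ : {f : Fin D → A // f ≠ v'})
            else ⟨v, hvv⟩)
          = (if h : blkw D M (cmps D M v v' hD0 Y2) k ≠ v'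
            then (⟨blkw D M (cmps D M v v' hD0 Y2) k, h⟩ : {f : Fin D → A // f ≠ v'})
            else ⟨v, hvv⟩) := congrFun heq k
      rw [dif_pos hb1, dif_pos hb2] at this2
      exact congrArg Subtype.val this2
    have hbe : blkw D M (cmps D M v v' hD0 Y1) = blkw D M (cmps D M v v' hD0 Y2) :=
      funext hblocks
    calc cmps D M v v' hD0 Y1
        = fromBlocks D M hD0 (blkw D M (cmps D M v v' hD0 Y1)) := (fromBlocks_blkw D M hD0 _).symm
      _ = fromBlocks D M hD0 (blkw D M (cmps D M v v' hD0 Y2)) := by rw [hbe]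
      _ = cmps D M v v' hD0 Y2 := fromBlocks_blkw D M hD0 _
  have h4 : Fintype.card (Fin (M+1) → {f : Fin D → A // f ≠ v'})
      = (Fintype.card A ^ D - 1) ^ (M+1) := by
    rw [Fintype.card_fun]
    have e2 : Fintype.card {f : Fin D → A // f = v'} = 1 := Fintype.card_subtype_eq v'
    have e3 : Fintype.card {f : Fin D → A // f ≠ v'}
        = Fintype.card (Fin D → A) - Fintype.card {f : Fin D → A // f = v'} :=
      Fintype.card_subtype_compl _
    rw [e3, e2, Fintype.card_fun, Fintype.card_fin, Fintype.card_fin]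
  omega

end Moore


noncomputable def extW {k : ℕ} (w : Fin k → A) : Config A :=
  fun i => if h : 0 ≤ i ∧ i < (k : ℤ) then w ⟨i.toNat, by omega⟩ else defA

lemma extW_pos {k : ℕ} (w : Fin k → A) (q : ℤ) (h0 : 0 ≤ q) (h1 : q < (k:ℤ)) :
    extW w q = w ⟨q.toNat, by omega⟩ := dif_pos ⟨h0, h1⟩

lemma extW_neg {k : ℕ} (w : Fin k → A) (q : ℤ) (h : ¬(0 ≤ q ∧ q < (k:ℤ))) :
    extW w q = defA := dif_neg h

lemma extW_coe {k : ℕ} (w : Fin k → A) (j : Fin k) : extW w ((j:ℕ) : ℤ) = w j := by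
  rw [extW_pos w _ (by positivity) (by exact_mod_cast j.isLt)]
  congr 1

lemma extW_cast {k k' : ℕ} (h : k' = k) (w : Fin k → A) :
    extW (fun i : Fin k' => w (Fin.cast h i)) = extW w := by
  subst h
  rfl

def clen (n R : ℕ) : ℕ → ℕ
  | 0 => n
  | N+1 => n + (2*R + clen n R N)

def appI {A : Type} {k m : ℕ} (u : Fin k → A) (w : Fin m → A) : Fin (k + m) → A :=
  fun i => if hi : (i:ℕ) < k then u ⟨(i:ℕ), hi⟩ else w ⟨(i:ℕ) - k, by have := i.isLt; omega⟩

def chainW {A : Type} (n R : ℕ) (w0 : Fin n → A) :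
    (N : ℕ) → (Fin N → (Fin (2*R) → A)) → (Fin (clen n R N) → A)
  | 0, _ => w0
  | N+1, us => appI w0 (appI (us 0) (chainW n R w0 N (fun k => us k.succ)))

structure CAS (A : Type) [Fintype A] [Nonempty A] : Type where
  G : Config A → Config A
  R : ℕ
  hsur : Function.Surjective G
  hcm : ∀ (c : ℤ) (y : Config A), G (shiftZ c y) = shiftZ c (G y)
  hrad : ∀ (y z : Config A) (j : ℤ),
    (∀ i : ℤ, j - (R:ℤ) ≤ i ∧ i ≤ j + R → y i = z i) → G y j = G z j

namespace CAS

variable (S : CAS A)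

lemma at_shift (c : ℤ) (y : Config A) (j : ℤ) : S.G (shiftZ c y) j = S.G y (j + c) := by
  rw [S.hcm]; rfl

noncomputable def wimg (n : ℕ) (v : Fin (n + 2*S.R) → A) : Fin n → A :=
  fun i => S.G (extW v) ((S.R : ℤ) + i)

lemma transfer {k : ℕ} (v : Fin (k + 2*S.R) → A) (y : Config A) (c : ℤ)
    (hagree : ∀ q : ℤ, 0 ≤ q → q < (k : ℤ) + 2*(S.R:ℤ) → extW v q = y (q + c)) (i : Fin k) :
    S.wimg k v i = S.G y ((S.R : ℤ) + i + c) := by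
  have h1 : S.G y (((S.R:ℤ) + i) + c) = S.G (shiftZ c y) ((S.R:ℤ) + i) :=
    (S.at_shift c y _).symm
  show S.G (extW v) ((S.R : ℤ) + i) = S.G y ((S.R:ℤ) + i + c)
  rw [show (S.R:ℤ) + i + c = ((S.R:ℤ) + i) + c from by ring, h1]
  apply S.hrad
  intro q hq
  have hik := i.isLt
  have h0 : 0 ≤ q := by omega
  have h2 : q < (k:ℤ) + 2*(S.R:ℤ) := by omega
  show extW v q = y (q + c)
  exact hagree q h0 h2

lemma wimg_surj (n : ℕ) : Function.Surjective (S.wimg n) := by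
  intro w
  set y : Config A := fun i =>
    if h : (S.R:ℤ) ≤ i ∧ i < (S.R:ℤ) + n then w ⟨(i - S.R).toNat, by omega⟩ else defA with hy
  obtain ⟨z, hz⟩ := S.hsur y
  refine ⟨fun j : Fin (n + 2*S.R) => z ((j:ℕ) : ℤ), ?_⟩
  funext i
  have h1 : S.wimg n (fun j : Fin (n + 2*S.R) => z ((j:ℕ) : ℤ)) i
      = S.G z ((S.R:ℤ) + i + 0) := by
    apply S.transfer
    intro q hq0 hq1
    rw [extW_pos _ q hq0 (by push_cast; omega)]
    simp only [Fin.val_mk]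
    rw [add_zero, Int.toNat_of_nonneg hq0]
  have hik := i.isLt
  have henum : (S.R:ℤ) ≤ (S.R:ℤ) + i ∧ (S.R:ℤ) + i < (S.R:ℤ) + n := by
    constructor
    · omega
    · have : ((i:ℕ):ℤ) < (n:ℤ) := by exact_mod_cast hik
      omega
  rw [h1, add_zero, hz]
  show (if h : (S.R:ℤ) ≤ (S.R:ℤ) + (i:ℕ) ∧ (S.R:ℤ) + (i:ℕ) < (S.R:ℤ) + n then
      w ⟨(((S.R:ℤ) + (i:ℕ)) - S.R).toNat, by omega⟩ else defA) = w i
  rw [dif_pos henum]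
  congr 1
  ext
  simp only [Fin.val_mk]
  omega


-- ============ splitting / gluing words ============

def takeW (n1 n2 : ℕ) (v : Fin ((n1 + n2) + 2*S.R) → A) : Fin (n1 + 2*S.R) → A :=
  fun j => v ⟨(j:ℕ), by have := j.isLt; omega⟩

def dropW (n1 n2 : ℕ) (v : Fin ((n1 + n2) + 2*S.R) → A) : Fin (n2 + 2*S.R) → A :=
  fun j => v ⟨n1 + (j:ℕ), by have := j.isLt; omega⟩

def lbord {k : ℕ} (v : Fin (k + 2*S.R) → A) : Fin (2*S.R) → A :=
  fun j => v ⟨(j:ℕ), by have := j.isLt; omega⟩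

def rbord {k : ℕ} (v : Fin (k + 2*S.R) → A) : Fin (2*S.R) → A :=
  fun j => v ⟨k + (j:ℕ), by have := j.isLt; omega⟩

def glueW (n1 n2 : ℕ) (v1 : Fin (n1 + 2*S.R) → A) (v2 : Fin (n2 + 2*S.R) → A) :
    Fin ((n1 + n2) + 2*S.R) → A :=
  fun i => if hi : (i:ℕ) < n1 then v1 ⟨(i:ℕ), by omega⟩
           else v2 ⟨(i:ℕ) - n1, by have := i.isLt; omega⟩

lemma glue_take_drop (n1 n2 : ℕ) (v : Fin ((n1 + n2) + 2*S.R) → A) :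
    S.glueW n1 n2 (S.takeW n1 n2 v) (S.dropW n1 n2 v) = v := by
  funext i
  by_cases hi : (i:ℕ) < n1
  · rw [show S.glueW n1 n2 (S.takeW n1 n2 v) (S.dropW n1 n2 v) i
        = S.takeW n1 n2 v ⟨(i:ℕ), by omega⟩ from dif_pos hi]
    rfl
  · rw [show S.glueW n1 n2 (S.takeW n1 n2 v) (S.dropW n1 n2 v) i
        = S.dropW n1 n2 v ⟨(i:ℕ) - n1, by have := i.isLt; omega⟩ from dif_neg hi]
    show v _ = v i
    congr 1
    refine Fin.ext ?_
    show n1 + ((i:ℕ) - n1) = (i:ℕ)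
    omega

lemma take_glue (n1 n2 : ℕ) (v1 : Fin (n1 + 2*S.R) → A) (v2 : Fin (n2 + 2*S.R) → A)
    (hcomp : S.rbord v1 = S.lbord v2) :
    S.takeW n1 n2 (S.glueW n1 n2 v1 v2) = v1 := by
  funext j
  by_cases hj : (j:ℕ) < n1
  · rw [show S.takeW n1 n2 (S.glueW n1 n2 v1 v2) j
        = S.glueW n1 n2 v1 v2 ⟨(j:ℕ), by have := j.isLt; omega⟩ from rfl]
    rw [show S.glueW n1 n2 v1 v2 ⟨(j:ℕ), by have := j.isLt; omega⟩
        = v1 ⟨(j:ℕ), by omega⟩ from dif_pos hj]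
  · have hj2 : (j:ℕ) - n1 < 2*S.R := by have := j.isLt; omega
    rw [show S.takeW n1 n2 (S.glueW n1 n2 v1 v2) j
        = S.glueW n1 n2 v1 v2 ⟨(j:ℕ), by have := j.isLt; omega⟩ from rfl]
    rw [show S.glueW n1 n2 v1 v2 ⟨(j:ℕ), by have := j.isLt; omega⟩
        = v2 ⟨(j:ℕ) - n1, by have := j.isLt; omega⟩ from dif_neg hj]
    have := congrFun hcomp ⟨(j:ℕ) - n1, hj2⟩
    rw [show S.lbord v2 ⟨(j:ℕ) - n1, hj2⟩ = v2 ⟨(j:ℕ) - n1, by omega⟩ from rfl] at this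
    rw [show S.rbord v1 ⟨(j:ℕ) - n1, hj2⟩ = v1 ⟨n1 + ((j:ℕ) - n1), by omega⟩ from rfl] at this
    rw [← this]
    exact congrArg v1 (Fin.ext (by simp only [Fin.val_mk]; omega))
  
lemma drop_glue (n1 n2 : ℕ) (v1 : Fin (n1 + 2*S.R) → A) (v2 : Fin (n2 + 2*S.R) → A) :
    S.dropW n1 n2 (S.glueW n1 n2 v1 v2) = v2 := by
  funext j
  have hj : ¬ (n1 + (j:ℕ) < n1) := by omega
  rw [show S.dropW n1 n2 (S.glueW n1 n2 v1 v2) j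
      = S.glueW n1 n2 v1 v2 ⟨n1 + (j:ℕ), by have := j.isLt; omega⟩ from rfl]
  rw [show S.glueW n1 n2 v1 v2 ⟨n1 + (j:ℕ), by have := j.isLt; omega⟩
      = v2 ⟨n1 + (j:ℕ) - n1, by have := j.isLt; omega⟩ from dif_neg hj]
  congr 1
  refine Fin.ext ?_
  show n1 + (j:ℕ) - n1 = (j:ℕ)
  omega

lemma wimg_take (n1 n2 : ℕ) (v : Fin ((n1 + n2) + 2*S.R) → A) (i : Fin n1) :
    S.wimg n1 (S.takeW n1 n2 v) i
      = S.wimg (n1 + n2) v ⟨(i:ℕ), by have := i.isLt; omega⟩ := by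
  have ht := S.transfer (S.takeW n1 n2 v) (extW v) 0 ?_ i
  · rw [ht]
    show S.G (extW v) ((S.R:ℤ) + ((i:ℕ):ℤ) + 0) = S.G (extW v) ((S.R:ℤ) + ((i:ℕ):ℤ))
    rw [add_zero]
  · intro q h0 h1
    have hik : q < ((n1 + n2 + 2*S.R : ℕ) : ℤ) := by push_cast; push_cast at h1; omega
    rw [add_zero, extW_pos _ q h0 (by push_cast; push_cast at h1; omega), extW_pos _ q h0 hik]
    rfl

lemma wimg_drop (n1 n2 : ℕ) (v : Fin ((n1 + n2) + 2*S.R) → A) (i : Fin n2) :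
    S.wimg n2 (S.dropW n1 n2 v) i
      = S.wimg (n1 + n2) v ⟨n1 + (i:ℕ), by have := i.isLt; omega⟩ := by
  have ht := S.transfer (S.dropW n1 n2 v) (extW v) (n1:ℤ) ?_ i
  · rw [ht]
    show S.G (extW v) ((S.R:ℤ) + i + n1) = S.G (extW v) ((S.R:ℤ) + ((⟨n1 + (i:ℕ), _⟩ : Fin (n1+n2)) : ℕ))
    congr 1
    simp only [Fin.val_mk]
    push_cast
    omega
  · intro q h0 h1
    push_cast at h1
    rw [extW_pos _ q h0 (by push_cast; omega), extW_pos _ (q + n1) (by omega) (by push_cast; omega)]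
    exact congrArg v (Fin.ext (by simp only [Fin.val_mk]; omega))

lemma cmps_apply_pt {n : ℕ} (M : ℕ) (v v' : Fin (n + 2*S.R) → A) (hD0 : 0 < n + 2*S.R)
    (Z : Fin ((M+1)*(n + 2*S.R)) → A) (i : Fin ((M+1)*(n + 2*S.R))) :
    cmps (n + 2*S.R) M v v' hD0 Z i
      = if blkw (n + 2*S.R) M Z ⟨(i:ℕ)/(n + 2*S.R), (Nat.div_lt_iff_lt_mul hD0).mpr i.isLt⟩ = v'
        then v ⟨(i:ℕ) % (n + 2*S.R), Nat.mod_lt _ hD0⟩ else Z i := by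
  by_cases hc : blkw (n + 2*S.R) M Z ⟨(i:ℕ)/(n + 2*S.R), (Nat.div_lt_iff_lt_mul hD0).mpr i.isLt⟩ = v'
  · rw [if_pos hc]
    show (if blkw (n + 2*S.R) M Z ⟨(i:ℕ)/(n + 2*S.R), (Nat.div_lt_iff_lt_mul hD0).mpr i.isLt⟩ = v'
        then v else blkw (n + 2*S.R) M Z ⟨(i:ℕ)/(n + 2*S.R), (Nat.div_lt_iff_lt_mul hD0).mpr i.isLt⟩)
        ⟨(i:ℕ) % (n + 2*S.R), Nat.mod_lt _ hD0⟩ = v ⟨(i:ℕ) % (n + 2*S.R), Nat.mod_lt _ hD0⟩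
    rw [if_pos hc]
  · rw [if_neg hc]
    show (if blkw (n + 2*S.R) M Z ⟨(i:ℕ)/(n + 2*S.R), (Nat.div_lt_iff_lt_mul hD0).mpr i.isLt⟩ = v'
        then v else blkw (n + 2*S.R) M Z ⟨(i:ℕ)/(n + 2*S.R), (Nat.div_lt_iff_lt_mul hD0).mpr i.isLt⟩)
        ⟨(i:ℕ) % (n + 2*S.R), Nat.mod_lt _ hD0⟩ = Z i
    rw [if_neg hc]
    exact congrFun (fromBlocks_blkw (n + 2*S.R) M hD0 Z) i

lemma no_diamond (n : ℕ) (v v' : Fin (n + 2*S.R) → A)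
    (him : S.wimg n v = S.wimg n v')
    (hbord : ∀ j : Fin (n + 2*S.R), ((j:ℕ) < 2*S.R ∨ n ≤ (j:ℕ)) → v j = v' j) :
    v = v' := by
  by_contra hne
  have hA2 : 2 ≤ Fintype.card A := by
    obtain ⟨j0, hj0⟩ := Function.ne_iff.mp hne
    exact Fintype.one_lt_card_iff.mpr ⟨v j0, v' j0, hj0⟩
  have hD0 : 0 < n + 2*S.R := by
    by_contra h
    apply hne
    funext i
    exact absurd i.isLt (by omega)
  have main : ∀ M : ℕ,
      Fintype.card A ^ ((M+1)*n + M*(2*S.R)) ≤ (Fintype.card A ^ (n + 2*S.R) - 1) ^ (M+1) := by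
    intro M
    have hlen : ((M+1)*n + M*(2*S.R)) + 2*S.R = (M+1)*(n + 2*S.R) := by ring
    have claim1 : ∀ Z : Fin ((M+1)*(n + 2*S.R)) → A,
        (fun i : Fin ((M+1)*n + M*(2*S.R)) =>
          S.G (extW (cmps (n + 2*S.R) M v v' hD0 Z)) ((S.R:ℤ) + i))
        = (fun i : Fin ((M+1)*n + M*(2*S.R)) => S.G (extW Z) ((S.R:ℤ) + i)) := by
      intro Z
      funext i
      show S.G (extW (cmps (n + 2*S.R) M v v' hD0 Z)) ((S.R:ℤ) + i) = S.G (extW Z) ((S.R:ℤ) + i)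
      by_cases hdiff : ∀ q : ℤ, (i:ℕ) ≤ q ∧ q ≤ (i:ℕ) + 2*(S.R:ℤ) →
          extW (cmps (n + 2*S.R) M v v' hD0 Z) q = extW Z q
      · apply S.hrad
        intro q hq
        exact hdiff q ⟨by omega, by omega⟩
      · push_neg at hdiff
        obtain ⟨p, hp, hnep⟩ := hdiff
        have hpr : 0 ≤ p ∧ p < (((M+1)*(n + 2*S.R) : ℕ) : ℤ) := by
          by_contra hout
          apply hnep
          rw [extW_neg _ _ (by push_cast at hout ⊢; omega), extW_neg _ _ (by push_cast at hout ⊢; omega)]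
        have hpn2 : p.toNat < (M+1)*(n + 2*S.R) := by omega
        have hne2 : cmps (n + 2*S.R) M v v' hD0 Z ⟨p.toNat, hpn2⟩ ≠ Z ⟨p.toNat, hpn2⟩ := by
          intro hEq
          apply hnep
          rw [extW_pos _ _ hpr.1 (by exact_mod_cast hpr.2),
              extW_pos _ _ hpr.1 (by exact_mod_cast hpr.2)]
          exact hEq
        have hcondp : blkw (n + 2*S.R) M Z
            ⟨p.toNat/(n + 2*S.R),
             (Nat.div_lt_iff_lt_mul hD0).mpr ((⟨p.toNat, hpn2⟩ : Fin ((M+1)*(n + 2*S.R))).isLt)⟩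
            = v' := by
          by_contra hc
          apply hne2
          rw [cmps_apply_pt S M v v' hD0 Z ⟨p.toNat, hpn2⟩, if_neg hc]
        have hvalp : Z ⟨p.toNat, hpn2⟩ = v' ⟨p.toNat % (n + 2*S.R), Nat.mod_lt _ hD0⟩ := by
          have hcf := congrFun hcondp ⟨p.toNat % (n + 2*S.R), Nat.mod_lt _ hD0⟩
          rw [← hcf]
          show Z ⟨p.toNat, hpn2⟩ = Z ⟨(p.toNat/(n + 2*S.R))*(n + 2*S.R) + p.toNat % (n + 2*S.R), _⟩
          congr 1
          refine Fin.ext ?_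
          show p.toNat = (p.toNat/(n + 2*S.R))*(n + 2*S.R) + p.toNat % (n + 2*S.R)
          rw [Nat.mul_comm]
          exact (Nat.div_add_mod _ _).symm
        have hdiffj : 2*S.R ≤ p.toNat % (n + 2*S.R) ∧ p.toNat % (n + 2*S.R) < n := by
          by_contra hcon
          apply hne2
          rw [cmps_apply_pt S M v v' hD0 Z ⟨p.toNat, hpn2⟩, if_pos hcondp, hvalp]
          exact hbord ⟨p.toNat % (n + 2*S.R), Nat.mod_lt _ hD0⟩ (by simp only [Fin.val_mk]; omega)
        -- arithmetic facts
        have hdm : (p.toNat/(n + 2*S.R))*(n + 2*S.R) + p.toNat % (n + 2*S.R) = p.toNat := by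
          rw [Nat.mul_comm]; exact Nat.div_add_mod _ _
        have hkub : (p.toNat/(n + 2*S.R))*(n + 2*S.R) + (n + 2*S.R) ≤ (M+1)*(n + 2*S.R) := by
          have hkk : p.toNat/(n + 2*S.R) < M+1 := (Nat.div_lt_iff_lt_mul hD0).mpr hpn2
          calc (p.toNat/(n + 2*S.R))*(n + 2*S.R) + (n + 2*S.R)
              = (p.toNat/(n + 2*S.R) + 1) * (n + 2*S.R) := by ring
            _ ≤ (M+1)*(n + 2*S.R) := Nat.mul_le_mul_right _ hkk
        have hiLM := i.isLt
        have wsub : (i:ℕ) - (p.toNat/(n + 2*S.R))*(n + 2*S.R) < n := by omega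
        -- generic transfer within the block
        have hagree_gen : ∀ (W : Fin ((M+1)*(n + 2*S.R)) → A) (vv : Fin (n + 2*S.R) → A),
            (∀ j : Fin (n + 2*S.R),
              W ⟨(p.toNat/(n + 2*S.R))*(n + 2*S.R) + (j:ℕ),
                 lt_of_lt_of_le (Nat.add_lt_add_left j.isLt _) hkub⟩ = vv j) →
            S.G (extW W) ((S.R:ℤ) + i)
              = S.wimg n vv ⟨(i:ℕ) - (p.toNat/(n + 2*S.R))*(n + 2*S.R), wsub⟩ := by
          intro W vv hblock
          have ht := S.transfer vv (extW W) (((p.toNat/(n + 2*S.R))*(n + 2*S.R) : ℕ) : ℤ) ?_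
              ⟨(i:ℕ) - (p.toNat/(n + 2*S.R))*(n + 2*S.R), wsub⟩
          · rw [ht]
            congr 1
            simp only [Fin.val_mk]
            omega
          · intro q hq0 hq1
            push_cast at hq1
            rw [extW_pos vv q hq0 (by omega)]
            rw [extW_pos W (q + ((p.toNat/(n + 2*S.R))*(n + 2*S.R) : ℕ)) (by omega)
                (by omega)]
            rw [← hblock ⟨q.toNat, by omega⟩]
            congr 1
            refine Fin.ext ?_
            simp only [Fin.val_mk]
            omega
        have blockR : ∀ j : Fin (n + 2*S.R),
            Z ⟨(p.toNat/(n + 2*S.R))*(n + 2*S.R) + (j:ℕ),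
               lt_of_lt_of_le (Nat.add_lt_add_left j.isLt _) hkub⟩ = v' j :=
          fun j => congrFun hcondp j
        have blockL : ∀ j : Fin (n + 2*S.R),
            cmps (n + 2*S.R) M v v' hD0 Z
              ⟨(p.toNat/(n + 2*S.R))*(n + 2*S.R) + (j:ℕ),
               lt_of_lt_of_le (Nat.add_lt_add_left j.isLt _) hkub⟩ = v j := by
          intro j
          have h1 := congrFun (blkw_cmps (n + 2*S.R) M v v' hD0 Z
            ⟨p.toNat/(n + 2*S.R),
             (Nat.div_lt_iff_lt_mul hD0).mpr ((⟨p.toNat, hpn2⟩ : Fin ((M+1)*(n + 2*S.R))).isLt)⟩) j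
          rw [if_pos hcondp] at h1
          exact h1
        rw [hagree_gen (cmps (n + 2*S.R) M v v' hD0 Z) v blockL,
            hagree_gen Z v' blockR, him]
    have psi_surj : Function.Surjective
        (fun (Z : Fin ((M+1)*(n + 2*S.R)) → A) (i : Fin ((M+1)*n + M*(2*S.R))) =>
          S.G (extW Z) ((S.R:ℤ) + i)) := by
      intro w
      obtain ⟨v0, hv0⟩ := S.wimg_surj ((M+1)*n + M*(2*S.R)) w
      refine ⟨fun i => v0 (Fin.cast hlen.symm i), ?_⟩
      funext i
      show S.G (extW (fun i => v0 (Fin.cast hlen.symm i))) ((S.R:ℤ) + i) = w i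
      rw [extW_cast hlen.symm v0]
      exact congrFun hv0 i
    have hmoore := moore_count (n + 2*S.R) M v v' hD0 hne
        (fun (Z : Fin ((M+1)*(n + 2*S.R)) → A) (i : Fin ((M+1)*n + M*(2*S.R))) =>
          S.G (extW Z) ((S.R:ℤ) + i)) psi_surj claim1
    rwa [Fintype.card_fun, Fintype.card_fin] at hmoore
  -- final contradiction
  have hK1 : 1 ≤ Fintype.card A ^ (2*S.R) := Nat.one_le_pow _ _ (by omega)
  have hb2 : 2 ≤ Fintype.card A ^ (n + 2*S.R) := by
    calc 2 = 2^1 := rfl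
      _ ≤ 2 ^ (n + 2*S.R) := Nat.pow_le_pow_right (by norm_num) (by omega)
      _ ≤ (Fintype.card A) ^ (n + 2*S.R) := Nat.pow_le_pow_left hA2 _
  set K := Fintype.card A ^ (2*S.R) with hKdef
  set β := Fintype.card A ^ (n + 2*S.R) with hβdef
  set M := K*(β-1) + K with hMdef
  have h1 := main M
  have hpow : K * Fintype.card A ^ ((M+1)*n + M*(2*S.R)) = β ^ (M+1) := by
    rw [hKdef, hβdef, ← pow_add, ← pow_mul]
    congr 1
    ring
  have h2 : β ^ (M+1) ≤ K * (β - 1) ^ (M+1) := by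
    rw [← hpow]
    exact Nat.mul_le_mul_left K h1
  have hsubmul : (K-1)*(β-1) + (β-1) = K*(β-1) := by
    rw [Nat.sub_one_mul]
    have : β - 1 ≤ K * (β-1) := Nat.le_mul_of_pos_left _ (by omega)
    omega
  have h3 := need1 K (β-1) (M+1) hK1 (by omega) (by omega) (by omega)
  rw [Nat.sub_add_cancel (by omega)] at h3
  omega

-- ============ counting ============

noncomputable def pcount (n : ℕ) (w : Fin n → A) : ℕ :=
  (Finset.univ.filter (fun v : Fin (n + 2*S.R) → A => S.wimg n v = w)).card

noncomputable def rcount (n : ℕ) (w : Fin n → A) (b : Fin (2*S.R) → A) : ℕ :=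
  (Finset.univ.filter (fun v : Fin (n + 2*S.R) → A =>
    S.wimg n v = w ∧ S.rbord v = b)).card

noncomputable def lcount (n : ℕ) (w : Fin n → A) (b : Fin (2*S.R) → A) : ℕ :=
  (Finset.univ.filter (fun v : Fin (n + 2*S.R) → A =>
    S.wimg n v = w ∧ S.lbord v = b)).card

lemma pcount_sum (n : ℕ) :
    ∑ w : Fin n → A, S.pcount n w = Fintype.card A ^ (n + 2*S.R) := by
  have h := Finset.card_eq_sum_card_fiberwise
    (f := S.wimg n) (s := Finset.univ) (t := Finset.univ) (fun x _ => Finset.mem_univ _)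
  rw [Finset.card_univ, Fintype.card_fun, Fintype.card_fin] at h
  simp only [pcount]
  exact h.symm

lemma pcount_pos (n : ℕ) (w : Fin n → A) : 1 ≤ S.pcount n w := by
  obtain ⟨v, hv⟩ := S.wimg_surj n w
  have : v ∈ Finset.univ.filter (fun v : Fin (n + 2*S.R) → A => S.wimg n v = w) :=
    Finset.mem_filter.mpr ⟨Finset.mem_univ _, hv⟩
  exact Finset.card_pos.mpr ⟨v, this⟩

lemma rcount_sum (n : ℕ) (w : Fin n → A) :
    ∑ b : Fin (2*S.R) → A, S.rcount n w b = S.pcount n w := by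
  have h := Finset.card_eq_sum_card_fiberwise
    (f := fun v : Fin (n + 2*S.R) → A => S.rbord v)
    (s := Finset.univ.filter (fun v : Fin (n + 2*S.R) → A => S.wimg n v = w))
    (t := Finset.univ) (fun x _ => Finset.mem_univ _)
  rw [show S.pcount n w
      = (Finset.univ.filter (fun v : Fin (n + 2*S.R) → A => S.wimg n v = w)).card from rfl, h]
  apply Finset.sum_congr rfl
  intro b _
  rw [Finset.filter_filter]
  rfl

lemma pcount_le_sq (n : ℕ) (w : Fin n → A) :
    S.pcount n w ≤ Fintype.card A ^ (2*S.R) * Fintype.card A ^ (2*S.R) := by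
  have hinj : Set.InjOn (fun v : Fin (n + 2*S.R) → A => (S.lbord v, S.rbord v))
      ↑(Finset.univ.filter (fun v : Fin (n + 2*S.R) → A => S.wimg n v = w)) := by
    intro v1 hv1 v2 hv2 heq
    have h1 : S.wimg n v1 = w := (Finset.mem_filter.mp hv1).2
    have h2 : S.wimg n v2 = w := (Finset.mem_filter.mp hv2).2
    have hlb : S.lbord v1 = S.lbord v2 := congrArg Prod.fst heq
    have hrb : S.rbord v1 = S.rbord v2 := congrArg Prod.snd heq
    apply S.no_diamond n v1 v2 (by rw [h1, h2])
    intro j hj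
    rcases hj with hj | hj
    · have := congrFun hlb ⟨(j:ℕ), hj⟩
      calc v1 j = v1 ⟨(j:ℕ), by have := j.isLt; omega⟩ := congrArg v1 (Fin.ext rfl)
        _ = v2 ⟨(j:ℕ), by have := j.isLt; omega⟩ := this
        _ = v2 j := congrArg v2 (Fin.ext rfl)
    · have hsub : (j:ℕ) - n < 2*S.R := by have := j.isLt; omega
      have := congrFun hrb ⟨(j:ℕ) - n, hsub⟩
      calc v1 j = v1 ⟨n + ((j:ℕ) - n), by have := j.isLt; omega⟩ :=
            congrArg v1 (Fin.ext (by simp only [Fin.val_mk]; omega))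
        _ = v2 ⟨n + ((j:ℕ) - n), by have := j.isLt; omega⟩ := this
        _ = v2 j := congrArg v2 (Fin.ext (by simp only [Fin.val_mk]; omega))
  have hcard := Finset.card_le_card_of_injOn _ (fun _ _ => Finset.mem_univ _) hinj
  calc S.pcount n w ≤ (Finset.univ : Finset ((Fin (2*S.R) → A) × (Fin (2*S.R) → A))).card := hcard
    _ = Fintype.card A ^ (2*S.R) * Fintype.card A ^ (2*S.R) := by
        rw [Finset.card_univ, Fintype.card_prod, Fintype.card_fun, Fintype.card_fin]

-- ============ gluing identities ============

lemma rbord_take_eq_lbord_drop (n1 n2 : ℕ) (v : Fin ((n1+n2) + 2*S.R) → A) :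
    S.rbord (S.takeW n1 n2 v) = S.lbord (S.dropW n1 n2 v) := by
  funext j
  show v _ = v _
  exact congrArg v (Fin.ext rfl)

lemma wimg_take_of (n1 n2 : ℕ) (w1 : Fin n1 → A) (w2 : Fin n2 → A)
    (v : Fin ((n1+n2) + 2*S.R) → A) (h : S.wimg (n1+n2) v = appI w1 w2) :
    S.wimg n1 (S.takeW n1 n2 v) = w1 := by
  funext i
  calc S.wimg n1 (S.takeW n1 n2 v) i
      = S.wimg (n1+n2) v ⟨(i:ℕ), by have := i.isLt; omega⟩ := S.wimg_take n1 n2 v i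
    _ = appI w1 w2 ⟨(i:ℕ), by have := i.isLt; omega⟩ := congrFun h _
    _ = w1 i := dif_pos i.isLt

lemma wimg_drop_of (n1 n2 : ℕ) (w1 : Fin n1 → A) (w2 : Fin n2 → A)
    (v : Fin ((n1+n2) + 2*S.R) → A) (h : S.wimg (n1+n2) v = appI w1 w2) :
    S.wimg n2 (S.dropW n1 n2 v) = w2 := by
  funext i
  calc S.wimg n2 (S.dropW n1 n2 v) i
      = S.wimg (n1+n2) v ⟨n1 + (i:ℕ), by have := i.isLt; omega⟩ := S.wimg_drop n1 n2 v i
    _ = appI w1 w2 ⟨n1 + (i:ℕ), by have := i.isLt; omega⟩ := congrFun h _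
    _ = w2 ⟨n1 + (i:ℕ) - n1, by have := i.isLt; omega⟩ := dif_neg (by simp only [Fin.val_mk]; omega)
    _ = w2 i := congrArg w2 (Fin.ext (by simp only [Fin.val_mk]; omega))

lemma wimg_glue_eq (n1 n2 : ℕ) (w1 : Fin n1 → A) (w2 : Fin n2 → A)
    (v1 : Fin (n1 + 2*S.R) → A) (v2 : Fin (n2 + 2*S.R) → A)
    (h1 : S.wimg n1 v1 = w1) (h2 : S.wimg n2 v2 = w2) (hcomp : S.rbord v1 = S.lbord v2) :
    S.wimg (n1 + n2) (S.glueW n1 n2 v1 v2) = appI w1 w2 := by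
  funext i
  by_cases hi : (i:ℕ) < n1
  · calc S.wimg (n1+n2) (S.glueW n1 n2 v1 v2) i
        = S.wimg (n1+n2) (S.glueW n1 n2 v1 v2)
            ⟨((⟨(i:ℕ), hi⟩ : Fin n1) : ℕ), by have := i.isLt; omega⟩ :=
          congrArg _ (Fin.ext rfl)
      _ = S.wimg n1 (S.takeW n1 n2 (S.glueW n1 n2 v1 v2)) ⟨(i:ℕ), hi⟩ :=
          (S.wimg_take n1 n2 _ ⟨(i:ℕ), hi⟩).symm
      _ = S.wimg n1 v1 ⟨(i:ℕ), hi⟩ := by rw [S.take_glue n1 n2 v1 v2 hcomp]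
      _ = w1 ⟨(i:ℕ), hi⟩ := by rw [h1]
      _ = appI w1 w2 i := by
          rw [show appI w1 w2 i = w1 ⟨(i:ℕ), hi⟩ from dif_pos hi]
  · have hi2 : (i:ℕ) - n1 < n2 := by have := i.isLt; omega
    calc S.wimg (n1+n2) (S.glueW n1 n2 v1 v2) i
        = S.wimg (n1+n2) (S.glueW n1 n2 v1 v2)
            ⟨n1 + ((⟨(i:ℕ) - n1, hi2⟩ : Fin n2) : ℕ), by have := i.isLt; omega⟩ :=
          congrArg _ (Fin.ext (by simp only [Fin.val_mk]; omega))
      _ = S.wimg n2 (S.dropW n1 n2 (S.glueW n1 n2 v1 v2)) ⟨(i:ℕ) - n1, hi2⟩ :=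
          (S.wimg_drop n1 n2 _ ⟨(i:ℕ) - n1, hi2⟩).symm
      _ = S.wimg n2 v2 ⟨(i:ℕ) - n1, hi2⟩ := by rw [S.drop_glue n1 n2 v1 v2]
      _ = w2 ⟨(i:ℕ) - n1, hi2⟩ := by rw [h2]
      _ = appI w1 w2 i := by
          rw [show appI w1 w2 i = w2 ⟨(i:ℕ) - n1, by have := i.isLt; omega⟩ from dif_neg hi]

lemma pcount_glue (n1 n2 : ℕ) (w1 : Fin n1 → A) (w2 : Fin n2 → A) :
    S.pcount (n1 + n2) (appI w1 w2)
      = ∑ b : Fin (2*S.R) → A, S.rcount n1 w1 b * S.lcount n2 w2 b := by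
  classical
  have hcard1 : S.pcount (n1+n2) (appI w1 w2)
      = (Finset.univ.filter
          (fun z : (Fin (n1 + 2*S.R) → A) × (Fin (n2 + 2*S.R) → A) =>
            S.wimg n1 z.1 = w1 ∧ S.wimg n2 z.2 = w2 ∧ S.rbord z.1 = S.lbord z.2)).card := by
    apply Finset.card_nbij' (fun v => (S.takeW n1 n2 v, S.dropW n1 n2 v))
        (fun z => S.glueW n1 n2 z.1 z.2)
    · intro v hv
      have hm := (Finset.mem_filter.mp hv).2
      refine Finset.mem_filter.mpr ⟨Finset.mem_univ _, ?_, ?_, ?_⟩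
      · exact S.wimg_take_of n1 n2 w1 w2 v hm
      · exact S.wimg_drop_of n1 n2 w1 w2 v hm
      · exact S.rbord_take_eq_lbord_drop n1 n2 v
    · intro z hz
      obtain ⟨_, h1, h2, hcomp⟩ := Finset.mem_filter.mp hz
      exact Finset.mem_filter.mpr ⟨Finset.mem_univ _, S.wimg_glue_eq n1 n2 w1 w2 z.1 z.2 h1 h2 hcomp⟩
    · intro v _
      exact S.glue_take_drop n1 n2 v
    · intro z hz
      obtain ⟨_, h1, h2, hcomp⟩ := Finset.mem_filter.mp hz
      have e1 := S.take_glue n1 n2 z.1 z.2 hcomp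
      have e2 := S.drop_glue n1 n2 z.1 z.2
      exact Prod.ext e1 e2
  rw [hcard1]
  have h := Finset.card_eq_sum_card_fiberwise
    (f := fun z : (Fin (n1 + 2*S.R) → A) × (Fin (n2 + 2*S.R) → A) => S.rbord z.1)
    (s := Finset.univ.filter
          (fun z : (Fin (n1 + 2*S.R) → A) × (Fin (n2 + 2*S.R) → A) =>
            S.wimg n1 z.1 = w1 ∧ S.wimg n2 z.2 = w2 ∧ S.rbord z.1 = S.lbord z.2))
    (t := Finset.univ) (fun x _ => Finset.mem_univ _)
  rw [h]
  apply Finset.sum_congr rfl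
  intro b _
  rw [Finset.filter_filter]
  have hset : (Finset.univ.filter
      (fun z : (Fin (n1 + 2*S.R) → A) × (Fin (n2 + 2*S.R) → A) =>
        (S.wimg n1 z.1 = w1 ∧ S.wimg n2 z.2 = w2 ∧ S.rbord z.1 = S.lbord z.2) ∧ S.rbord z.1 = b))
      = (Finset.univ.filter (fun v1 : Fin (n1 + 2*S.R) → A => S.wimg n1 v1 = w1 ∧ S.rbord v1 = b))
        ×ˢ (Finset.univ.filter (fun v2 : Fin (n2 + 2*S.R) → A => S.wimg n2 v2 = w2 ∧ S.lbord v2 = b)) := by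
    ext z
    simp only [Finset.mem_filter, Finset.mem_product, Finset.mem_univ, true_and]
    constructor
    · rintro ⟨⟨ha, hb2, hc⟩, hd⟩
      exact ⟨⟨ha, hd⟩, ⟨hb2, by rw [← hc, hd]⟩⟩
    · rintro ⟨⟨ha, hd⟩, ⟨hb2, hc⟩⟩
      exact ⟨⟨ha, hb2, by rw [hd, hc]⟩, hd⟩
  rw [hset, Finset.card_product]
  rfl

lemma rbord_appI (b c : Fin (2*S.R) → A) :
    S.rbord (appI b c : Fin (2*S.R + 2*S.R) → A) = c := by
  funext j
  calc S.rbord (appI b c : Fin (2*S.R + 2*S.R) → A) j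
      = appI b c ⟨2*S.R + (j:ℕ), by have := j.isLt; omega⟩ := rfl
    _ = c ⟨2*S.R + (j:ℕ) - 2*S.R, by have := j.isLt; omega⟩ :=
        dif_neg (by simp only [Fin.val_mk]; omega)
    _ = c j := congrArg c (Fin.ext (by simp only [Fin.val_mk]; omega))

lemma lbord_appI (b c : Fin (2*S.R) → A) :
    S.lbord (appI b c : Fin (2*S.R + 2*S.R) → A) = b := by
  funext j
  exact dif_pos j.isLt

lemma lbord_glue (ℓ : ℕ) (v1 : Fin (2*S.R + 2*S.R) → A) (v2 : Fin (ℓ + 2*S.R) → A) :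
    S.lbord (S.glueW (2*S.R) ℓ v1 v2) = S.lbord v1 := by
  funext j
  exact dif_pos j.isLt

lemma appI_lbord_drop (ℓ : ℕ) (bb : Fin (2*S.R) → A) (v : Fin ((2*S.R + ℓ) + 2*S.R) → A)
    (hlb : S.lbord v = bb) :
    (appI bb (S.lbord (S.dropW (2*S.R) ℓ v)) : Fin (2*S.R + 2*S.R) → A)
      = S.takeW (2*S.R) ℓ v := by
  funext i
  by_cases hi : (i:ℕ) < 2*S.R
  · calc (appI bb (S.lbord (S.dropW (2*S.R) ℓ v)) : Fin (2*S.R + 2*S.R) → A) i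
        = bb ⟨(i:ℕ), hi⟩ := dif_pos hi
      _ = S.lbord v ⟨(i:ℕ), hi⟩ := by rw [hlb]
      _ = S.takeW (2*S.R) ℓ v i := congrArg v (Fin.ext rfl)
  · calc (appI bb (S.lbord (S.dropW (2*S.R) ℓ v)) : Fin (2*S.R + 2*S.R) → A) i
        = S.lbord (S.dropW (2*S.R) ℓ v) ⟨(i:ℕ) - 2*S.R, by have := i.isLt; omega⟩ := dif_neg hi
      _ = v ⟨2*S.R + ((i:ℕ) - 2*S.R), by have := i.isLt; omega⟩ := congrArg v (Fin.ext rfl)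
      _ = S.takeW (2*S.R) ℓ v i := congrArg v (Fin.ext (by simp only [Fin.val_mk]; omega))

lemma lcount_glue_sum (ℓ : ℕ) (X : Fin ℓ → A) (b : Fin (2*S.R) → A) :
    ∑ u : Fin (2*S.R) → A, S.lcount (2*S.R + ℓ) (appI u X) b = S.pcount ℓ X := by
  classical
  have hfib := Finset.card_eq_sum_card_fiberwise
    (f := fun z : (Fin (2*S.R) → A) × (Fin ((2*S.R + ℓ) + 2*S.R) → A) => z.1)
    (s := Finset.univ.filter
      (fun z : (Fin (2*S.R) → A) × (Fin ((2*S.R + ℓ) + 2*S.R) → A) =>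
        S.wimg (2*S.R + ℓ) z.2 = appI z.1 X ∧ S.lbord z.2 = b))
    (t := Finset.univ) (fun x _ => Finset.mem_univ _)
  have hterm : ∀ u : Fin (2*S.R) → A,
      ((Finset.univ.filter
        (fun z : (Fin (2*S.R) → A) × (Fin ((2*S.R + ℓ) + 2*S.R) → A) =>
          S.wimg (2*S.R + ℓ) z.2 = appI z.1 X ∧ S.lbord z.2 = b)).filter
            (fun z => z.1 = u)).card
      = S.lcount (2*S.R + ℓ) (appI u X) b := by
    intro u
    apply Finset.card_nbij' (fun z => z.2) (fun v => (u, v))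
    · intro z hz
      rw [Finset.filter_filter] at hz
      obtain ⟨_, ⟨hw, hlb⟩, hfst⟩ := Finset.mem_filter.mp hz
      subst hfst
      exact Finset.mem_filter.mpr ⟨Finset.mem_univ _, hw, hlb⟩
    · intro v hv
      obtain ⟨_, hw, hlb⟩ := Finset.mem_filter.mp hv
      rw [Finset.filter_filter]
      exact Finset.mem_filter.mpr ⟨Finset.mem_univ _, ⟨hw, hlb⟩, rfl⟩
    · intro z hz
      rw [Finset.filter_filter] at hz
      obtain ⟨_, _, hfst⟩ := Finset.mem_filter.mp hz
      exact Prod.ext hfst.symm rfl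
    · intro v _
      rfl
  have hbij : (Finset.univ.filter
      (fun z : (Fin (2*S.R) → A) × (Fin ((2*S.R + ℓ) + 2*S.R) → A) =>
        S.wimg (2*S.R + ℓ) z.2 = appI z.1 X ∧ S.lbord z.2 = b)).card
      = S.pcount ℓ X := by
    apply Finset.card_nbij' (fun z => S.dropW (2*S.R) ℓ z.2)
      (fun v' => (S.wimg (2*S.R) (appI b (S.lbord v')),
        S.glueW (2*S.R) ℓ (appI b (S.lbord v')) v'))
    · intro z hz
      obtain ⟨_, hw, _⟩ := Finset.mem_filter.mp hz
      exact Finset.mem_filter.mpr ⟨Finset.mem_univ _, S.wimg_drop_of (2*S.R) ℓ z.1 X z.2 hw⟩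
    · intro v' hv'
      have hX : S.wimg ℓ v' = X := (Finset.mem_filter.mp hv').2
      have hcomp : S.rbord (appI b (S.lbord v') : Fin (2*S.R + 2*S.R) → A) = S.lbord v' :=
        S.rbord_appI b (S.lbord v')
      refine Finset.mem_filter.mpr ⟨Finset.mem_univ _, ?_, ?_⟩
      · exact S.wimg_glue_eq (2*S.R) ℓ _ X _ v' rfl hX hcomp
      · rw [S.lbord_glue ℓ _ v', S.lbord_appI]
    · intro z hz
      obtain ⟨_, hw, hlb⟩ := Finset.mem_filter.mp hz
      have hApp := S.appI_lbord_drop ℓ b z.2 hlb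
      refine Prod.ext ?_ ?_
      · show S.wimg (2*S.R) (appI b (S.lbord (S.dropW (2*S.R) ℓ z.2))) = z.1
        rw [hApp]
        exact S.wimg_take_of (2*S.R) ℓ z.1 X z.2 hw
      · show S.glueW (2*S.R) ℓ (appI b (S.lbord (S.dropW (2*S.R) ℓ z.2))) (S.dropW (2*S.R) ℓ z.2) = z.2
        rw [hApp]
        exact S.glue_take_drop (2*S.R) ℓ z.2
    · intro v' _
      exact S.drop_glue (2*S.R) ℓ _ v'
  rw [← hbij, hfib]
  apply Finset.sum_congr rfl
  intro u _
  exact (hterm u).symm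

lemma chain_step (n ℓ : ℕ) (w0 : Fin n → A) (X : Fin ℓ → A) :
    ∑ u : Fin (2*S.R) → A, S.pcount (n + (2*S.R + ℓ)) (appI w0 (appI u X))
      = S.pcount n w0 * S.pcount ℓ X := by
  calc ∑ u : Fin (2*S.R) → A, S.pcount (n + (2*S.R + ℓ)) (appI w0 (appI u X))
      = ∑ u : Fin (2*S.R) → A, ∑ b : Fin (2*S.R) → A,
          S.rcount n w0 b * S.lcount (2*S.R + ℓ) (appI u X) b := by
        apply Finset.sum_congr rfl
        intro u _
        exact S.pcount_glue n (2*S.R + ℓ) w0 (appI u X)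
    _ = ∑ b : Fin (2*S.R) → A, ∑ u : Fin (2*S.R) → A,
          S.rcount n w0 b * S.lcount (2*S.R + ℓ) (appI u X) b := Finset.sum_comm
    _ = ∑ b : Fin (2*S.R) → A,
          S.rcount n w0 b * ∑ u : Fin (2*S.R) → A, S.lcount (2*S.R + ℓ) (appI u X) b := by
        apply Finset.sum_congr rfl
        intro b _
        rw [Finset.mul_sum]
    _ = ∑ b : Fin (2*S.R) → A, S.rcount n w0 b * S.pcount ℓ X := by
        apply Finset.sum_congr rfl
        intro b _
        rw [S.lcount_glue_sum ℓ X b]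
    _ = (∑ b : Fin (2*S.R) → A, S.rcount n w0 b) * S.pcount ℓ X := by
        rw [Finset.sum_mul]
    _ = S.pcount n w0 * S.pcount ℓ X := by rw [S.rcount_sum]


lemma chain_sum (n : ℕ) (w0 : Fin n → A) : ∀ N : ℕ,
    ∑ us : Fin N → (Fin (2*S.R) → A), S.pcount (clen n S.R N) (chainW n S.R w0 N us)
      = S.pcount n w0 ^ (N+1) := by
  intro N
  induction N with
  | zero =>
      have hc : ∀ us : Fin 0 → (Fin (2*S.R) → A),
          S.pcount (clen n S.R 0) (chainW n S.R w0 0 us) = S.pcount n w0 := fun _ => rfl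
      rw [Finset.sum_congr rfl (fun us _ => hc us), Finset.sum_const, Finset.card_univ,
        Fintype.card_fun, Fintype.card_fin, pow_zero, one_smul, pow_one]
  | succ N ih =>
      rw [← Equiv.sum_comp (Fin.consEquiv (fun _ : Fin (N+1) => (Fin (2*S.R) → A)))
        (fun us => S.pcount (clen n S.R (N+1)) (chainW n S.R w0 (N+1) us))]
      rw [Fintype.sum_prod_type]
      have hstep : ∀ (u : Fin (2*S.R) → A) (us' : Fin N → (Fin (2*S.R) → A)),
          S.pcount (clen n S.R (N+1))
            (chainW n S.R w0 (N+1)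
              ((Fin.consEquiv (fun _ : Fin (N+1) => (Fin (2*S.R) → A))) (u, us')))
          = S.pcount (clen n S.R (N+1)) (appI w0 (appI u (chainW n S.R w0 N us'))) := by
        intro u us'
        have harg : chainW n S.R w0 (N+1)
            ((Fin.consEquiv (fun _ : Fin (N+1) => (Fin (2*S.R) → A))) (u, us'))
            = appI w0 (appI u (chainW n S.R w0 N us')) := by
          have e2 : (fun k : Fin N =>
              Fin.cons (α := fun _ : Fin (N+1) => (Fin (2*S.R) → A)) u us' k.succ) = us' :=
            funext fun k => Fin.cons_succ (α := fun _ : Fin (N+1) => (Fin (2*S.R) → A)) u us' k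
          show appI w0 (appI ((Fin.cons (α := fun _ : Fin (N+1) => (Fin (2*S.R) → A)) u us') 0)
              (chainW n S.R w0 N (fun k =>
                Fin.cons (α := fun _ : Fin (N+1) => (Fin (2*S.R) → A)) u us' k.succ)))
              = appI w0 (appI u (chainW n S.R w0 N us'))
          rw [e2, Fin.cons_zero]
        rw [harg]
      calc ∑ u : Fin (2*S.R) → A, ∑ us' : Fin N → (Fin (2*S.R) → A),
            S.pcount (clen n S.R (N+1))
              (chainW n S.R w0 (N+1)
                ((Fin.consEquiv (fun _ : Fin (N+1) => (Fin (2*S.R) → A))) (u, us')))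
          = ∑ u : Fin (2*S.R) → A, ∑ us' : Fin N → (Fin (2*S.R) → A),
            S.pcount (clen n S.R (N+1)) (appI w0 (appI u (chainW n S.R w0 N us'))) := by
            apply Finset.sum_congr rfl
            intro u _
            apply Finset.sum_congr rfl
            intro us' _
            exact hstep u us'
        _ = ∑ us' : Fin N → (Fin (2*S.R) → A), ∑ u : Fin (2*S.R) → A,
            S.pcount (clen n S.R (N+1)) (appI w0 (appI u (chainW n S.R w0 N us'))) :=
            Finset.sum_comm
        _ = ∑ us' : Fin N → (Fin (2*S.R) → A),
            S.pcount n w0 * S.pcount (clen n S.R N) (chainW n S.R w0 N us') := by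
            apply Finset.sum_congr rfl
            intro us' _
            exact S.chain_step n (clen n S.R N) w0 (chainW n S.R w0 N us')
        _ = S.pcount n w0 * ∑ us' : Fin N → (Fin (2*S.R) → A),
            S.pcount (clen n S.R N) (chainW n S.R w0 N us') := by rw [Finset.mul_sum]
        _ = S.pcount n w0 ^ (N+2) := by rw [ih]; ring

lemma pcount_le (n : ℕ) (w : Fin n → A) : S.pcount n w ≤ Fintype.card A ^ (2*S.R) := by
  by_contra hlt
  push_neg at hlt
  have hK1 : 1 ≤ Fintype.card A ^ (2*S.R) := Nat.one_le_pow _ _ Fintype.card_pos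
  set K := Fintype.card A ^ (2*S.R) with hKdef
  have hchain := S.chain_sum n w (K*K)
  have hub : ∑ us : Fin (K*K) → (Fin (2*S.R) → A),
      S.pcount (clen n S.R (K*K)) (chainW n S.R w (K*K) us) ≤ K ^ (K*K) * (K*K) := by
    have h := Finset.sum_le_card_nsmul Finset.univ
      (fun us : Fin (K*K) → (Fin (2*S.R) → A) =>
        S.pcount (clen n S.R (K*K)) (chainW n S.R w (K*K) us)) (K*K)
      (fun us _ => S.pcount_le_sq _ _)
    rw [Finset.card_univ, Fintype.card_fun, Fintype.card_fun, Fintype.card_fin,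
      Fintype.card_fin, smul_eq_mul, ← hKdef] at h
    exact h
  have hlb : (K+1) ^ (K*K+1) ≤ S.pcount n w ^ (K*K+1) :=
    Nat.pow_le_pow_left (by omega) _
  rw [hchain] at hub
  have hcontra : (K+1) ^ (K*K+1) ≤ K ^ (K*K+2) := by
    calc (K+1) ^ (K*K+1) ≤ S.pcount n w ^ (K*K+1) := hlb
      _ ≤ K ^ (K*K) * (K*K) := hub
      _ = K ^ (K*K+2) := by ring
  exact absurd hcontra (not_le.mpr (need2 K hK1))

lemma pcount_ge (n : ℕ) (w : Fin n → A) : Fintype.card A ^ (2*S.R) ≤ S.pcount n w := by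
  have hsum := S.pcount_sum n
  have hsplit := Finset.sum_erase_add Finset.univ (fun w' : Fin n → A => S.pcount n w')
    (Finset.mem_univ w)
  have hrest : ∑ w' ∈ Finset.univ.erase w, S.pcount n w'
      ≤ (Fintype.card A ^ n - 1) * Fintype.card A ^ (2*S.R) := by
    have h := Finset.sum_le_card_nsmul (Finset.univ.erase w)
      (fun w' : Fin n → A => S.pcount n w') (Fintype.card A ^ (2*S.R))
      (fun w' _ => S.pcount_le n w')
    rw [Finset.card_erase_of_mem (Finset.mem_univ w), Finset.card_univ,
        Fintype.card_fun, Fintype.card_fin, smul_eq_mul] at h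
    exact h
  have hA1 : 1 ≤ Fintype.card A ^ n := Nat.one_le_pow _ _ Fintype.card_pos
  have htot : Fintype.card A ^ (n + 2*S.R) = Fintype.card A ^ n * Fintype.card A ^ (2*S.R) :=
    pow_add _ _ _
  have hmul : (Fintype.card A ^ n - 1) * Fintype.card A ^ (2*S.R) + Fintype.card A ^ (2*S.R)
      = Fintype.card A ^ n * Fintype.card A ^ (2*S.R) := by
    rw [Nat.sub_one_mul]
    have : Fintype.card A ^ (2*S.R) ≤ Fintype.card A ^ n * Fintype.card A ^ (2*S.R) :=
      Nat.le_mul_of_pos_left _ (by omega)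
    omega
  have e1 : ∑ w' ∈ Finset.univ.erase w, S.pcount n w' + S.pcount n w
      = Fintype.card A ^ n * Fintype.card A ^ (2*S.R) := by
    rw [hsplit, hsum]
    exact htot
  omega

end CAS


section Recurrence
variable [TopologicalSpace A] [DiscreteTopology A]

lemma recurrence (F : Config A → Config A) (hC : Continuous F)
    (hcm1 : F ∘ shift = shift ∘ F) (hsur : Function.Surjective F)
    (P : Config A) (a b : ℤ) :
    ∃ (y : Config A) (t : ℕ), 0 < t ∧ ∀ i : ℤ, a ≤ i → i ≤ b →
      (y i = P i ∧ F^[t] y i = P i) := by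
  classical
  set n : ℕ := (b - a).toNat + 1 with hn
  set u : Fin n → A := fun q => P (a + (q:ℕ)) with hu
  set T : ℕ := Fintype.card A ^ n with hT
  have hrad_all : ∀ t : ℕ, ∃ ρ : ℕ, ∀ (y z : Config A) (j : ℤ),
      (∀ i : ℤ, j - (ρ:ℤ) ≤ i ∧ i ≤ j + ρ → y i = z i) → F^[t] y j = F^[t] z j :=
    fun t => exists_radius (F^[t]) (hC.iterate t) (iter_commZ F hcm1 t)
  choose ρ hρ using hrad_all
  set R : ℕ := ∑ t ∈ Finset.range (T+2), ρ t with hR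
  have hρR : ∀ t, t ≤ T+1 → ρ t ≤ R :=
    fun t ht => Finset.single_le_sum (f := ρ) (fun _ _ => Nat.zero_le _)
      (Finset.mem_range.mpr (by omega))
  set St : ℕ → Finset (Fin (n + 2*R) → A) := fun t =>
    Finset.univ.filter (fun v : Fin (n + 2*R) → A =>
      (fun i : Fin n => F^[t] (extW v) ((R:ℤ) + i)) = u) with hSt
  have hcard : ∀ t, 1 ≤ t → t ≤ T+1 → Fintype.card A ^ (2*R) ≤ (St t).card := by
    intro t _ h2
    have hrt : ∀ (y z : Config A) (j : ℤ),
        (∀ i : ℤ, j - (R:ℤ) ≤ i ∧ i ≤ j + R → y i = z i) → F^[t] y j = F^[t] z j := by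
      intro y z j hag
      apply hρ t
      intro i hi
      apply hag
      have := hρR t h2
      omega
    exact (CAS.pcount_ge ⟨F^[t], R, hsur.iterate t, iter_commZ F hcm1 t, hrt⟩ n u)
  have hexist : ¬ (∀ t1 ∈ Finset.Icc 1 (T+1), ∀ t2 ∈ Finset.Icc 1 (T+1),
      t1 ≠ t2 → Disjoint (St t1) (St t2)) := by
    intro hdisj
    have hsum := Finset.card_biUnion hdisj
    have h1 : (T+1) * (Fintype.card A ^ (2*R)) ≤ ∑ t ∈ Finset.Icc 1 (T+1), (St t).card := by
      calc (T+1) * (Fintype.card A ^ (2*R))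
          = ∑ _t ∈ Finset.Icc 1 (T+1), Fintype.card A ^ (2*R) := by
            rw [Finset.sum_const, Nat.card_Icc, smul_eq_mul]
            congr 1
        _ ≤ ∑ t ∈ Finset.Icc 1 (T+1), (St t).card :=
            Finset.sum_le_sum (fun t ht => hcard t (Finset.mem_Icc.mp ht).1 (Finset.mem_Icc.mp ht).2)
    have h2 : ∑ t ∈ Finset.Icc 1 (T+1), (St t).card ≤ Fintype.card A ^ (n + 2*R) := by
      rw [← hsum]
      calc ((Finset.Icc 1 (T+1)).biUnion St).card
          ≤ (Finset.univ : Finset (Fin (n + 2*R) → A)).card := Finset.card_le_univ _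
        _ = Fintype.card A ^ (n + 2*R) := by
            rw [Finset.card_univ, Fintype.card_fun, Fintype.card_fin]
    have h3 : Fintype.card A ^ (n + 2*R) = T * Fintype.card A ^ (2*R) := by
      rw [hT, ← pow_add]
    have h4 : 1 ≤ Fintype.card A ^ (2*R) := Nat.one_le_pow _ _ Fintype.card_pos
    have h5 : (T+1) * (Fintype.card A ^ (2*R))
        = T * Fintype.card A ^ (2*R) + Fintype.card A ^ (2*R) := by ring
    omega
  push_neg at hexist
  obtain ⟨t1, ht1, t2, ht2, hne, hnd⟩ := hexist
  obtain ⟨v, hv1, hv2⟩ := Finset.not_disjoint_iff.mp hnd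
  -- order them
  have key : ∀ s l : ℕ, s ∈ Finset.Icc 1 (T+1) → l ∈ Finset.Icc 1 (T+1) → s < l →
      v ∈ St s → v ∈ St l →
      ∃ (y : Config A) (t : ℕ), 0 < t ∧ ∀ i : ℤ, a ≤ i → i ≤ b →
        (y i = P i ∧ F^[t] y i = P i) := by
    intro s l _ _ hsl hvs hvl
    have hs := (Finset.mem_filter.mp hvs).2
    have hl := (Finset.mem_filter.mp hvl).2
    refine ⟨shiftZ ((R:ℤ) - a) (F^[s] (extW v)), l - s, by omega, ?_⟩
    intro i hai hib
    have hidx : ((i - a).toNat : ℤ) = i - a := Int.toNat_of_nonneg (by omega)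
    have hilt : (i - a).toNat < n := by omega
    constructor
    · have := congrFun hs ⟨(i - a).toNat, hilt⟩
      show F^[s] (extW v) (i + ((R:ℤ) - a)) = P i
      have hpos : i + ((R:ℤ) - a) = (R:ℤ) + (((i - a).toNat : ℕ) : ℤ) := by
        push_cast [hidx]
        ring
      rw [hpos, this]
      show P (a + ((i-a).toNat : ℕ)) = P i
      congr 1
      omega
    · have := congrFun hl ⟨(i - a).toNat, hilt⟩
      show F^[l-s] (shiftZ ((R:ℤ) - a) (F^[s] (extW v))) i = P i
      rw [iter_commZ F hcm1 (l-s)]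
      show F^[l-s] (F^[s] (extW v)) (i + ((R:ℤ) - a)) = P i
      rw [← Function.iterate_add_apply]
      have hls : l - s + s = l := by omega
      rw [hls]
      have hpos : i + ((R:ℤ) - a) = (R:ℤ) + (((i - a).toNat : ℕ) : ℤ) := by
        push_cast [hidx]
        ring
      rw [hpos, this]
      show P (a + ((i-a).toNat : ℕ)) = P i
      congr 1
      omega
  rcases Nat.lt_or_ge t1 t2 with hlt | hge
  · exact key t1 t2 ht1 ht2 hlt hv1 hv2
  · have hlt : t2 < t1 := by omega
    exact key t2 t1 ht2 ht1 hlt hv2 hv1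

end Recurrence

section Main
variable [TopologicalSpace A] [DiscreteTopology A]

theorem dense_periodic (F : Config A → Config A) (hC : Continuous F)
    (hcm1 : F ∘ shift = shift ∘ F) (hsur : Function.Surjective F)
    (x : Config A) (hx : EquicontinuousPt F x) :
    Dense {y : Config A | ∃ p : ℕ, 0 < p ∧ F^[p] y = y} := by
  classical
  obtain ⟨r, hr⟩ := exists_radius F hC (commZ F hcm1)
  obtain ⟨n0, hn0⟩ := hx r
  set n : ℕ := max n0 r with hndef
  have hn0n : n0 ≤ n := le_max_left _ _
  have hrn : r ≤ n := le_max_right _ _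
  -- blocking word property
  have blocking : ∀ (y : Config A) (j : ℤ),
      (∀ i : ℤ, -(n:ℤ) ≤ i → i ≤ n → y (j + i) = x i) →
      ∀ (t : ℕ) (i : ℤ), -(r:ℤ) ≤ i → i ≤ r → F^[t] y (j + i) = F^[t] x i := by
    intro y j hyj t i h1 h2
    have hagree : ∀ k : ℤ, -(n0:ℤ) ≤ k → k ≤ n0 → (shiftZ j y) k = x k := by
      intro k hk1 hk2
      show y (k + j) = x k
      rw [show k + j = j + k from by ring]
      exact hyj k (by omega) (by omega)
    have hcon := hn0 (shiftZ j y) hagree t i h1 h2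
    rw [iter_commZ F hcm1 t j y] at hcon
    show F^[t] y (j + i) = F^[t] x i
    rw [show j + i = i + j from by ring]
    exact hcon
  -- autonomy between two blocking words
  have autonomy : ∀ (j1 j2 : ℤ) (y y' : Config A),
      (∀ i : ℤ, -(n:ℤ) ≤ i → i ≤ n → y (j1 + i) = x i) →
      (∀ i : ℤ, -(n:ℤ) ≤ i → i ≤ n → y (j2 + i) = x i) →
      (∀ i : ℤ, -(n:ℤ) ≤ i → i ≤ n → y' (j1 + i) = x i) →
      (∀ i : ℤ, -(n:ℤ) ≤ i → i ≤ n → y' (j2 + i) = x i) →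
      (∀ i : ℤ, j1 - r ≤ i → i ≤ j2 + r → y i = y' i) →
      ∀ (t : ℕ) (i : ℤ), j1 - r ≤ i → i ≤ j2 + r → F^[t] y i = F^[t] y' i := by
    intro j1 j2 y y' hw1 hw2 hw1' hw2' hag t
    induction t with
    | zero => exact fun i h1 h2 => hag i h1 h2
    | succ t ih =>
        intro i h1 h2
        by_cases hc1 : i ≤ j1 + r
        · have e1 := blocking y j1 hw1 (t+1) (i - j1) (by omega) (by omega)
          have e2 := blocking y' j1 hw1' (t+1) (i - j1) (by omega) (by omega)
          rw [show j1 + (i - j1) = i from by ring] at e1 e2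
          rw [e1, e2]
        · by_cases hc2 : j2 - r ≤ i
          · have e1 := blocking y j2 hw2 (t+1) (i - j2) (by omega) (by omega)
            have e2 := blocking y' j2 hw2' (t+1) (i - j2) (by omega) (by omega)
            rw [show j2 + (i - j2) = i from by ring] at e1 e2
            rw [e1, e2]
          · rw [Function.iterate_succ_apply', Function.iterate_succ_apply']
            apply hr (F^[t] y) (F^[t] y') i
            intro q hq
            exact ih q (by omega) (by omega)
  -- density
  rw [dense_iff_inter_open]
  intro U hU hUne
  obtain ⟨y0, hy0⟩ := hUne
  obtain ⟨I, su, hIu, hsub⟩ := isOpen_pi_iff.mp hU y0 hy0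
  set M : ℕ := I.sup (fun i => i.natAbs) with hMdef
  set j1 : ℤ := -(M:ℤ) - 1 - n with hj1def
  set j2 : ℤ := (M:ℤ) + 1 + n with hj2def
  set Q : Config A := fun i =>
    if j1 - n ≤ i ∧ i ≤ j1 + n then x (i - j1)
    else if j2 - n ≤ i ∧ i ≤ j2 + n then x (i - j2)
    else y0 i with hQdef
  have hQ1 : ∀ i : ℤ, -(n:ℤ) ≤ i → i ≤ n → Q (j1 + i) = x i := by
    intro i h1 h2
    rw [hQdef]
    show (if j1 - n ≤ j1 + i ∧ j1 + i ≤ j1 + n then x (j1 + i - j1)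
      else if j2 - n ≤ j1 + i ∧ j1 + i ≤ j2 + n then x (j1 + i - j2) else y0 (j1 + i)) = x i
    rw [if_pos ⟨by omega, by omega⟩]
    congr 1
    ring
  have hQ2 : ∀ i : ℤ, -(n:ℤ) ≤ i → i ≤ n → Q (j2 + i) = x i := by
    intro i h1 h2
    rw [hQdef]
    show (if j1 - n ≤ j2 + i ∧ j2 + i ≤ j1 + n then x (j2 + i - j1)
      else if j2 - n ≤ j2 + i ∧ j2 + i ≤ j2 + n then x (j2 + i - j2) else y0 (j2 + i)) = x i
    rw [if_neg (by omega), if_pos ⟨by omega, by omega⟩]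
    congr 1
    ring
  have hQ3 : ∀ i : ℤ, -(M:ℤ) ≤ i → i ≤ M → Q i = y0 i := by
    intro i h1 h2
    rw [hQdef]
    show (if j1 - n ≤ i ∧ i ≤ j1 + n then x (i - j1)
      else if j2 - n ≤ i ∧ i ≤ j2 + n then x (i - j2) else y0 i) = y0 i
    rw [if_neg (by omega), if_neg (by omega)]
  obtain ⟨y, t, ht, hmatch⟩ := recurrence F hC hcm1 hsur Q (j1 - n) (j2 + n)
  set Λ : ℤ := j2 - j1 with hΛdef
  have hΛpos : 0 < Λ := by omega
  have hΛn : (n:ℤ) < Λ := by omega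
  have hmod : ∀ i : ℤ, 0 ≤ (i - j1) % Λ ∧ (i - j1) % Λ < Λ :=
    fun i => ⟨Int.emod_nonneg _ (by omega), Int.emod_lt_of_pos _ hΛpos⟩
  set Y : Config A := fun i => y (j1 + (i - j1) % Λ) with hYdef
  -- y has blocking words at j1 and j2
  have hyW1 : ∀ i : ℤ, -(n:ℤ) ≤ i → i ≤ n → y (j1 + i) = x i := by
    intro i h1 h2
    rw [(hmatch (j1 + i) (by omega) (by omega)).1]
    exact hQ1 i h1 h2
  have hyW2 : ∀ i : ℤ, -(n:ℤ) ≤ i → i ≤ n → y (j2 + i) = x i := by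
    intro i h1 h2
    rw [(hmatch (j2 + i) (by omega) (by omega)).1]
    exact hQ2 i h1 h2
  -- emod computations
  have hemod1 : ∀ i : ℤ, 0 ≤ i → i < Λ → i % Λ = i := fun i h1 h2 => Int.emod_eq_of_lt h1 h2
  have hemod2 : ∀ i : ℤ, (i + Λ) % Λ = i % Λ := by
    intro i
    have : i + Λ = i + Λ * 1 := by ring
    rw [this, Int.add_mul_emod_self_left]
  -- Y has blocking words at j1 and j2
  have hYW1 : ∀ i : ℤ, -(n:ℤ) ≤ i → i ≤ n → Y (j1 + i) = x i := by
    intro i h1 h2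
    rw [hYdef]
    show y (j1 + (j1 + i - j1) % Λ) = x i
    rw [show j1 + i - j1 = i from by ring]
    rcases le_or_gt 0 i with hc | hc
    · rw [hemod1 i hc (by omega)]
      exact hyW1 i h1 h2
    · have e1 : i % Λ = i + Λ := by
        rw [← hemod2 i]
        exact hemod1 (i + Λ) (by omega) (by omega)
      rw [e1, show j1 + (i + Λ) = j2 + i from by omega]
      exact hyW2 i h1 h2
  have hYW2 : ∀ i : ℤ, -(n:ℤ) ≤ i → i ≤ n → Y (j2 + i) = x i := by
    intro i h1 h2
    rw [hYdef]
    show y (j1 + (j2 + i - j1) % Λ) = x i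
    rw [show j2 + i - j1 = i + Λ from by omega, hemod2 i]
    rcases le_or_gt 0 i with hc | hc
    · rw [hemod1 i hc (by omega)]
      exact hyW1 i h1 h2
    · have e1 : i % Λ = i + Λ := by
        rw [← hemod2 i]
        exact hemod1 (i + Λ) (by omega) (by omega)
      rw [e1, show j1 + (i + Λ) = j2 + i from by omega]
      exact hyW2 i h1 h2
  -- Y agrees with y on [j1 - r, j2 + r]
  have hagY : ∀ i : ℤ, j1 - r ≤ i → i ≤ j2 + r → Y i = y i := by
    intro i h1 h2
    rw [hYdef]
    show y (j1 + (i - j1) % Λ) = y i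
    rcases le_or_gt j1 i with hc1 | hc1
    · rcases lt_or_ge i j2 with hc2 | hc2
      · rw [hemod1 (i - j1) (by omega) (by omega)]
        congr 1
        ring
      · -- i ∈ [j2, j2 + r]
        have e1 : i - j1 = (i - j2) + Λ := by omega
        rw [e1, hemod2, hemod1 (i - j2) (by omega) (by omega)]
        rw [show j1 + (i - j2) = j1 + (i - j2) from rfl]
        have e2 := hyW1 (i - j2) (by omega) (by omega)
        have e3 := hyW2 (i - j2) (by omega) (by omega)
        rw [show j2 + (i - j2) = i from by ring] at e3
        rw [e2, ← e3]
    · -- i ∈ [j1 - r, j1)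
      have e1 : (i - j1) % Λ = (i - j1) + Λ := by
        rw [← hemod2 (i - j1)]
        exact hemod1 (i - j1 + Λ) (by omega) (by omega)
      rw [e1, show j1 + (i - j1 + Λ) = j2 + (i - j1) from by omega]
      have e2 := hyW2 (i - j1) (by omega) (by omega)
      have e3 := hyW1 (i - j1) (by omega) (by omega)
      rw [show j1 + (i - j1) = i from by ring] at e3
      rw [e2, ← e3]
  -- periodicity of Y
  have hper : ∀ i : ℤ, Y (i + Λ) = Y i := by
    intro i
    rw [hYdef]
    show y (j1 + (i + Λ - j1) % Λ) = y (j1 + (i - j1) % Λ)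
    rw [show i + Λ - j1 = (i - j1) + Λ from by ring, hemod2]
  have hperN : ∀ (u : Config A), (∀ i, u (i + Λ) = u i) → ∀ (q : ℤ) (i : ℤ),
      u (i + Λ*q) = u i := by
    intro u hu q
    induction q using Int.induction_on with
    | zero => intro i; rw [show i + Λ*0 = i from by ring]
    | succ k ih =>
        intro i
        rw [show i + Λ*((k:ℤ)+1) = (i + Λ*k) + Λ from by ring, hu, ih]
    | pred k ih =>
        intro i
        calc u (i + Λ*(-(k:ℤ)-1)) = u (i + Λ*(-(k:ℤ)-1) + Λ) := (hu _).symm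
          _ = u (i + Λ*(-(k:ℤ))) := by rw [show i + Λ*(-(k:ℤ)-1) + Λ = i + Λ*(-(k:ℤ)) from by ring]
          _ = u i := ih i
  have hperF : ∀ i : ℤ, F^[t] Y (i + Λ) = F^[t] Y i := by
    have hshift : shiftZ Λ Y = Y := funext fun i => hper i
    intro i
    have e1 : F^[t] Y (i + Λ) = shiftZ Λ (F^[t] Y) i := rfl
    rw [e1, ← iter_commZ F hcm1 t Λ Y, hshift]
  -- F^[t] Y = Y on the window
  have hauto := autonomy j1 j2 Y y hYW1 hYW2 hyW1 hyW2 hagY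
  have hYt : ∀ i : ℤ, j1 - r ≤ i → i ≤ j2 + r → F^[t] Y i = Y i := by
    intro i h1 h2
    calc F^[t] Y i = F^[t] y i := hauto t i h1 h2
      _ = Q i := (hmatch i (by omega) (by omega)).2
      _ = y i := ((hmatch i (by omega) (by omega)).1).symm
      _ = Y i := (hagY i h1 h2).symm
  -- conclude exact periodicity
  have hfix : F^[t] Y = Y := by
    funext i
    have hdm := Int.emod_add_mul_ediv (i - j1) Λ
    have hδ := hmod i
    have e0 : (j1 + (i - j1) % Λ) + Λ*((i - j1)/Λ) = i := by
      rw [add_assoc, hdm]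
      ring
    calc F^[t] Y i
        = F^[t] Y ((j1 + (i - j1) % Λ) + Λ*((i - j1)/Λ)) := by rw [e0]
      _ = F^[t] Y (j1 + (i - j1) % Λ) := hperN _ hperF _ _
      _ = Y (j1 + (i - j1) % Λ) := hYt _ (by omega) (by omega)
      _ = Y ((j1 + (i - j1) % Λ) + Λ*((i - j1)/Λ)) := (hperN _ hper _ _).symm
      _ = Y i := by rw [e0]
  -- Y belongs to U
  have hYU : Y ∈ U := by
    apply hsub
    intro i hi
    have hiM : i.natAbs ≤ M := Finset.le_sup (f := fun i : ℤ => i.natAbs) hi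
    have e1 : Y i = y0 i := by
      calc Y i = y i := hagY i (by omega) (by omega)
        _ = Q i := (hmatch i (by omega) (by omega)).1
        _ = y0 i := hQ3 i (by omega) (by omega)
    rw [e1]
    exact (hIu i hi).2
  exact ⟨Y, hYU, ⟨t, ht, hfix⟩⟩

end Main

end CAWork

theorem periodic_points_dense_of_surjective_with_equicontinuity_point
    {A : Type} [Fintype A] [Nonempty A] [TopologicalSpace A] [DiscreteTopology A]
    (F : Config A → Config A) (hF : IsCA F) (hsurj : Surjective F)
    (hx : ∃ x : Config A, EquicontinuousPt F x) :
    Dense {y : Config A | ∃ p : ℕ, 0 < p ∧ F^[p] y = y} := by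
  obtain ⟨x, hx⟩ := hx
  exact CAWork.dense_periodic F hF.1 hF.2 hsurj x hx
end

section
/- If every topologically mixing surjective cellular automaton (over every nonempty finite alphabet) has a dense set of periodic points, then every surjective cellular automaton has a dense set of periodic points. -/
open Function Set

/-- `F` is topologically mixing. -/
def TopMixing {A : Type*} [TopologicalSpace A] (F : Config A → Config A) : Prop :=
  ∀ U V : Set (Config A), IsOpen U → IsOpen V → U.Nonempty → V.Nonempty →
    ∃ N : ℕ, ∀ n : ℕ, N ≤ n → (U ∩ F^[n] ⁻¹' V).Nonempty

section Aux
variable {A : Type} [Fintype A] [Nonempty A] [TopologicalSpace A] [DiscreteTopology A]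

lemma shift_iter_apply (m : ℕ) (x : Config A) (i : ℤ) : (shift^[m] x) i = x (i + m) := by
  induction m generalizing x i with
  | zero => simp
  | succ n ih =>
    rw [Function.iterate_succ_apply, ih]
    show x (i + n + 1) = x (i + (n+1))
    congr 1
    push_cast
    ring

lemma shift_continuous : Continuous (shift : Config A → Config A) :=
  continuous_pi fun i => continuous_apply (i + 1)

lemma shift_injective : Function.Injective (shift : Config A → Config A) := by
  intro x y h
  funext i
  have := congrFun h (i - 1)
  simpa [shift] using this

lemma shift_surjective : Function.Surjective (shift : Config A → Config A) := by
  intro y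
  exact ⟨fun i => y (i - 1), funext fun i => by simp [shift]⟩

lemma cylinder_isOpen (x : Config A) (I : Finset ℤ) :
    IsOpen {y : Config A | ∀ i ∈ I, y i = x i} := by
  have : {y : Config A | ∀ i ∈ I, y i = x i} = Set.pi (I : Set ℤ) (fun i => {x i}) := by
    ext y; simp [Set.mem_pi]
  rw [this]
  exact isOpen_set_pi I.finite_toSet (fun i _ => isOpen_discrete _)

lemma exists_cylinder {s : Set (Config A)} (hs : IsOpen s) {x : Config A} (hx : x ∈ s) :
    ∃ I : Finset ℤ, {y : Config A | ∀ i ∈ I, y i = x i} ⊆ s := by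
  obtain ⟨I, u, h1, h2⟩ := isOpen_pi_iff.mp hs x hx
  refine ⟨I, fun y hy => h2 ?_⟩
  intro i hi
  have := (h1 i hi).2
  rw [Set.mem_setOf_eq] at hy
  rw [hy i hi]
  exact this

lemma exists_radius (F : Config A → Config A) (hF : Continuous F) :
    ∃ r : ℕ, ∀ x x' : Config A, (∀ j : ℤ, j.natAbs ≤ r → x j = x' j) → F x 0 = F x' 0 := by
  have hφ : Continuous (fun x : Config A => F x 0) := (continuous_apply (0:ℤ)).comp hF
  have key : ∀ x : Config A, ∃ I : Finset ℤ,
      {y : Config A | ∀ i ∈ I, y i = x i} ⊆ {y | F y 0 = F x 0} := by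
    intro x
    have hopen : IsOpen {y : Config A | F y 0 = F x 0} := by
      have : {y : Config A | F y 0 = F x 0} = (fun y : Config A => F y 0) ⁻¹' {F x 0} := rfl
      rw [this]
      exact hφ.isOpen_preimage _ (isOpen_discrete _)
    exact exists_cylinder hopen rfl
  choose I hI using key
  have hcover : (Set.univ : Set (Config A)) ⊆ ⋃ x : Config A, {y : Config A | ∀ i ∈ I x, y i = x i} := by
    intro x _
    exact Set.mem_iUnion.mpr ⟨x, fun i _ => rfl⟩
  obtain ⟨t, ht⟩ := isCompact_univ.elim_finite_subcover
    (fun x : Config A => {y : Config A | ∀ i ∈ I x, y i = x i})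
    (fun x => cylinder_isOpen x (I x)) hcover
  refine ⟨t.sup fun c => (I c).sup fun i => i.natAbs, fun x x' hagree => ?_⟩
  obtain ⟨c, hc, hxc⟩ : ∃ c ∈ t, x ∈ {y : Config A | ∀ i ∈ I c, y i = c i} := by
    have := ht (Set.mem_univ x)
    simpa using this
  have hx'c : x' ∈ {y : Config A | ∀ i ∈ I c, y i = c i} := by
    intro i hi
    have hb : i.natAbs ≤ t.sup fun c => (I c).sup fun i => i.natAbs :=
      le_trans (Finset.le_sup hi)
        (Finset.le_sup (f := fun c => (I c).sup fun i => i.natAbs) hc)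
    rw [← hagree i hb]
    exact hxc i hi
  have h1 := hI c hxc
  have h2 := hI c hx'c
  rw [Set.mem_setOf_eq] at h1 h2
  rw [h1, h2]



/-- The shift by an arbitrary integer. -/
def shiftZ {A : Type} (n : ℤ) (x : Config A) : Config A := fun i => x (i + n)

omit [Fintype A] [Nonempty A] [TopologicalSpace A] [DiscreteTopology A] in
lemma shiftZ_comm {F : Config A → Config A} (hFs : F ∘ shift = shift ∘ F) (n : ℤ) (x : Config A) :
    F (shiftZ n x) = shiftZ n (F x) := by
  have hstep : ∀ y : Config A, F (shift y) = shift (F y) := fun y => congrFun hFs y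
  have hshiftZ_succ : ∀ (m : ℤ) (y : Config A), shiftZ (m + 1) y = shift (shiftZ m y) := by
    intro m y; funext i
    show y (i + (m + 1)) = y ((i + 1) + m)
    congr 1; ring
  have hinv : ∀ y : Config A, F (shiftZ (-1) y) = shiftZ (-1) (F y) := by
    intro y
    have h1 : shift (shiftZ (-1) y) = y := by
      funext i; show y (i + 1 + (-1)) = y i; congr 1; ring
    have h2 := hstep (shiftZ (-1) y)
    rw [h1] at h2
    have : shiftZ (-1) (shift (F (shiftZ (-1) y))) = F (shiftZ (-1) y) := by
      funext i; show F (shiftZ (-1) y) (i + (-1) + 1) = F (shiftZ (-1) y) i; congr 1; ring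
    rw [← this, ← h2]
  induction n using Int.induction_on with
  | zero =>
      have : shiftZ 0 = (id : Config A → Config A) := by
        funext y i; show y (i + 0) = y i; congr 1; ring
      simp [this]
  | succ k ih =>
      rw [hshiftZ_succ, hstep, ih, ← hshiftZ_succ]
  | pred k ih =>
      have hneg : ∀ y : Config A, shiftZ (-(k:ℤ) - 1) y = shiftZ (-1) (shiftZ (-(k:ℤ)) y) := by
        intro y; funext i
        show y (i + (-(k:ℤ) - 1)) = y (i + (-1) + (-(k:ℤ)))
        congr 1; ring
      rw [hneg, hinv, ih, ← hneg]

end Aux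

theorem dense_periodic_points_of_mixing_implies_all_surjective :
    (∀ (A : Type) [Fintype A] [Nonempty A] [TopologicalSpace A] [DiscreteTopology A]
        (F : Config A → Config A), IsCA F → Surjective F → TopMixing F →
        Dense {y : Config A | ∃ p : ℕ, 0 < p ∧ F^[p] y = y}) →
    (∀ (A : Type) [Fintype A] [Nonempty A] [TopologicalSpace A] [DiscreteTopology A]
        (F : Config A → Config A), IsCA F → Surjective F →
        Dense {y : Config A | ∃ p : ℕ, 0 < p ∧ F^[p] y = y}) := by
  intro H A _ _ _ _ F hCA hSurj
  obtain ⟨hFc, hFs⟩ := hCA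
  obtain ⟨r, hr⟩ := exists_radius F hFc
  -- two-coordinate dependence for F
  have hF2 : ∀ (x x' : Config A) (a a' : ℤ),
      (∀ t : ℤ, t.natAbs ≤ r → x (a + t) = x' (a' + t)) → F x a = F x' a' := by
    intro x x' a a' h
    have e1 : F x a = F (shiftZ a x) 0 := by
      rw [shiftZ_comm hFs]; show F x a = F x (0 + a); congr 1; ring
    have e2 : F x' a' = F (shiftZ a' x') 0 := by
      rw [shiftZ_comm hFs]; show F x' a' = F x' (0 + a'); congr 1; ring
    rw [e1, e2]
    apply hr
    intro j hj
    show x (j + a) = x' (j + a')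
    have := h j hj
    calc x (j + a) = x (a + j) := by congr 1; ring
    _ = x' (a' + j) := this
    _ = x' (j + a') := by congr 1; ring
  set G : Config A → Config A := shift^[r+1] ∘ F with hGdef
  have hGapp : ∀ x i, G x i = F x (i + (r+1)) := by
    intro x i
    show (shift^[r+1] (F x)) i = F x (i + (r+1))
    rw [shift_iter_apply]
    push_cast
    rfl
  -- two-coordinate dependence for G
  have hG2 : ∀ (x x' : Config A) (i i' : ℤ),
      (∀ t : ℤ, 1 ≤ t → t ≤ 2*r+1 → x (i + t) = x' (i' + t)) → G x i = G x' i' := by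
    intro x x' i i' h
    rw [hGapp, hGapp]
    apply hF2
    intro t ht
    have h1 : (1:ℤ) ≤ (r+1) + t := by
      have : -(r:ℤ) ≤ t := by omega
      omega
    have h2 : (r:ℤ)+1+t ≤ 2*r+1 := by omega
    have := h ((r+1)+t) h1 h2
    calc x (i + (r+1) + t) = x (i + ((r+1)+t)) := by congr 1; ring
    _ = x' (i' + ((r+1)+t)) := this
    _ = x' (i' + (r+1) + t) := by congr 1; ring
  -- iterated dependence for G
  have hGdep : ∀ (n : ℕ) (x x' : Config A) (i i' : ℤ),
      (∀ t : ℤ, (n:ℤ) ≤ t → t ≤ n*(2*r+1) → x (i + t) = x' (i' + t)) →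
      G^[n] x i = G^[n] x' i' := by
    intro n
    induction n with
    | zero =>
        intro x x' i i' h
        have := h 0 le_rfl (by simp)
        simpa using this
    | succ n ih =>
        intro x x' i i' h
        rw [Function.iterate_succ_apply, Function.iterate_succ_apply]
        apply ih
        intro t ht1 ht2
        apply hG2
        intro u hu1 hu2
        have e1 : G x (i + t) = G x (i + t) := rfl
        have key : x (i + (t + u)) = x' (i' + (t + u)) := by
          apply h
          · push_cast; omega
          · push_cast at ht2 ⊢; nlinarith
        calc x (i + t + u) = x (i + (t + u)) := by congr 1; ring
        _ = x' (i' + (t + u)) := key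
        _ = x' (i' + t + u) := by congr 1; ring
  have hGc : Continuous G := by
    have hsc : Continuous (shift^[r+1] : Config A → Config A) := by
      induction' (r+1) with n ih
      · simpa using continuous_id
      · rw [Function.iterate_succ']
        exact shift_continuous.comp ih
    exact hsc.comp hFc
  have hGcomm : G ∘ shift = shift ∘ G := by
    funext x
    show shift^[r+1] (F (shift x)) = shift (shift^[r+1] (F x))
    have : F (shift x) = shift (F x) := congrFun hFs x
    rw [this, ← Function.iterate_succ_apply, Function.iterate_succ_apply']
  have hGsurj : Surjective G := by
    have : Surjective (shift^[r+1] : Config A → Config A) := shift_surjective.iterate _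
    exact this.comp hSurj
  have hGmix : TopMixing G := by
    intro U V hU hV ⟨u, hu⟩ ⟨v, hv⟩
    obtain ⟨I, hI⟩ := exists_cylinder hU hu
    obtain ⟨J, hJ⟩ := exists_cylinder hV hv
    set K : ℕ := (I ∪ J).sup fun i => i.natAbs with hK
    refine ⟨2*K+1, fun n hn => ?_⟩
    obtain ⟨w, hw⟩ := (hGsurj.iterate n) v
    set x : Config A := fun i => if i ∈ I then u i else w i with hx
    have hbound : ∀ i ∈ I ∪ J, i.natAbs ≤ K := fun i hi => Finset.le_sup hi
    refine ⟨x, hI (fun i hi => if_pos hi), ?_⟩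
    show G^[n] x ∈ V
    apply hJ
    intro j hj
    have hjb : j.natAbs ≤ K := hbound j (Finset.mem_union_right _ hj)
    have : G^[n] x j = G^[n] w j := by
      apply hGdep
      intro t ht1 ht2
      have hnot : j + t ∉ I := by
        intro hmem
        have := hbound _ (Finset.mem_union_left _ hmem)
        omega
      show (if j + t ∈ I then u (j+t) else w (j+t)) = w (j + t)
      rw [if_neg hnot]
    rw [this, hw]
  have hDense := H A G ⟨hGc, hGcomm⟩ hGsurj hGmix
  -- Now prove density of F-periodic points
  rw [dense_iff_inter_open]
  intro U hU hUne
  obtain ⟨x0, hx0⟩ := hUne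
  obtain ⟨S, hS⟩ := exists_cylinder hU hx0
  set K : ℕ := S.sup fun i => i.natAbs with hKdef
  have hSK : ∀ i ∈ S, i ≤ (K:ℤ) := by
    intro i hi
    have : i.natAbs ≤ K := Finset.le_sup hi
    omega
  -- find a G-periodic point in the cylinder
  have hcylNe : Set.Nonempty {y : Config A | ∀ i ∈ S, y i = x0 i} := ⟨x0, fun i _ => rfl⟩
  obtain ⟨y, hyCyl, p, hp, hGp⟩ :
      ∃ y, y ∈ {y : Config A | ∀ i ∈ S, y i = x0 i} ∧ ∃ p : ℕ, 0 < p ∧ G^[p] y = y := by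
    obtain ⟨y, h1, h2⟩ := hDense.inter_open_nonempty _ (cylinder_isOpen x0 S) hcylNe
    exact ⟨y, h1, h2⟩
  set B : ℕ := p * (2*r+1) with hBdef
  have hpB : p ≤ B := Nat.le_mul_of_pos_right p (by omega)
  -- pigeonhole: two equal windows
  obtain ⟨j1, j2, hj2K, hj12, hW⟩ :
      ∃ j1 j2 : ℤ, (K:ℤ) + 1 ≤ j2 ∧ j2 < j1 ∧
        ∀ t : ℤ, 0 ≤ t → t ≤ (B:ℤ) → y (j1 + t) = y (j2 + t) := by
    obtain ⟨n1, n2, hne, heq⟩ := Finite.exists_ne_map_eq_of_infinite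
      (fun n : ℕ => (fun t : Fin (B+1) => y ((K:ℤ) + 1 + n + t)))
    have key : ∀ a b : ℕ, ((fun t : Fin (B+1) => y ((K:ℤ) + 1 + a + t)) =
        (fun t : Fin (B+1) => y ((K:ℤ) + 1 + b + t))) →
        ∀ t : ℤ, 0 ≤ t → t ≤ (B:ℤ) →
          y (((K:ℤ)+1+a) + t) = y (((K:ℤ)+1+b) + t) := by
      intro a b hab t ht0 htB
      have hfin : t.toNat < B + 1 := by omega
      have := congrFun hab ⟨t.toNat, hfin⟩
      simp only at this
      have hcast : ((⟨t.toNat, hfin⟩ : Fin (B+1)) : ℤ) = t := by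
        simp [Int.toNat_of_nonneg ht0]
      rwa [hcast] at this
    rcases lt_or_gt_of_ne hne with hlt | hlt
    · exact ⟨(K:ℤ)+1+n2, (K:ℤ)+1+n1, by omega, by omega, key n2 n1 heq.symm⟩
    · exact ⟨(K:ℤ)+1+n1, (K:ℤ)+1+n2, by omega, by omega, key n1 n2 heq⟩
  set s : ℤ := j1 - j2 with hsdef
  have hs : 0 < s := by omega
  -- backward determinism
  have hback : ∀ j k : ℤ, (∀ t : ℤ, 0 ≤ t → t ≤ (B:ℤ) → y (j + t) = y (k + t)) →
      ∀ t : ℤ, 0 ≤ t → t ≤ (B:ℤ) → y ((j-1) + t) = y ((k-1) + t) := by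
    intro j k h t ht0 htB
    rcases eq_or_lt_of_le ht0 with h0 | h1
    · -- t = 0
      have e1 : y (j - 1) = (G^[p] y) (j-1) := by rw [hGp]
      have e2 : y (k - 1) = (G^[p] y) (k-1) := by rw [hGp]
      have e3 : (G^[p] y) (j-1) = (G^[p] y) (k-1) := by
        apply hGdep
        intro t' ht'1 ht'2
        have h1' : (0:ℤ) ≤ t' - 1 := by omega
        have h2' : t' - 1 ≤ (B:ℤ) := by
          have : (t' : ℤ) ≤ (p:ℤ) * (2*r+1) := ht'2
          have hBB : ((B:ℕ):ℤ) = (p:ℤ)*(2*(r:ℤ)+1) := by push_cast [hBdef]; ring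
          omega
        have := h (t' - 1) h1' h2'
        calc y (j - 1 + t') = y (j + (t' - 1)) := by congr 1; ring
        _ = y (k + (t' - 1)) := this
        _ = y (k - 1 + t') := by congr 1; ring
      rw [← h0]
      simpa using e1.trans (e3.trans e2.symm)
    · -- 1 ≤ t
      have := h (t - 1) (by omega) (by omega)
      calc y (j - 1 + t) = y (j + (t-1)) := by congr 1; ring
      _ = y (k + (t-1)) := this
      _ = y (k - 1 + t) := by congr 1; ring
  -- downward propagation
  have hdown : ∀ d : ℕ, ∀ t : ℤ, 0 ≤ t → t ≤ (B:ℤ) →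
      y ((j1 - d) + t) = y ((j2 - d) + t) := by
    intro d
    induction d with
    | zero => simpa using hW
    | succ d ih =>
        have := hback (j1 - d) (j2 - d) ih
        intro t ht0 htB
        have e1 : j1 - (d+1 : ℕ) = (j1 - d) - 1 := by push_cast; ring
        have e2 : j2 - (d+1 : ℕ) = (j2 - d) - 1 := by push_cast; ring
        rw [e1, e2]
        exact this t ht0 htB
  -- periodicity to the left of j1
  have hper : ∀ i : ℤ, i ≤ j1 → y i = y (i - s) := by
    intro i hi
    have hd : ((j1 - i).toNat : ℤ) = j1 - i := Int.toNat_of_nonneg (by omega)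
    have := hdown (j1 - i).toNat 0 le_rfl (by positivity)
    have e1 : j1 - ((j1 - i).toNat : ℤ) + 0 = i := by omega
    have e2 : j2 - ((j1 - i).toNat : ℤ) + 0 = i - s := by omega
    rw [e1, e2] at this
    exact this
  -- upward: y is s-periodic below j1
  have hup : ∀ (n : ℕ) (i : ℤ), i + n * s ≤ j1 → y (i + n * s) = y i := by
    intro n
    induction n with
    | zero => intro i _; norm_num
    | succ n ih =>
        intro i hle
        have hns : (n:ℤ) * s + s = ((n:ℕ)+1 : ℤ) * s := by ring
        have hcast : ((n+1 : ℕ) : ℤ) * s = (n:ℤ)*s + s := by push_cast; ring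
        have h1 : y (i + ((n+1:ℕ):ℤ) * s) = y (i + ((n+1:ℕ):ℤ) * s - s) := hper _ hle
        have h2 : i + ((n+1:ℕ):ℤ) * s - s = i + (n:ℕ) * s := by rw [hcast]; ring
        rw [h1, h2]
        apply ih
        have h3 : i + ((n:ℕ):ℤ) * s = i + ((n+1:ℕ):ℤ)*s - s := by rw [hcast]; ring
        rw [h3]
        linarith
  -- the periodic configuration z
  set z : Config A := fun i => y (j2 + (i - j2) % s) with hzdef
  have hzper : ∀ i, z (i + s) = z i := by
    intro i
    show y (j2 + (i + s - j2) % s) = y (j2 + (i - j2) % s)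
    congr 2
    have : i + s - j2 = (i - j2) + s := by ring
    rw [this]
    conv_lhs => rw [show i - j2 + s = i - j2 + 1 * s by ring]
    exact Int.add_mul_emod_self_right _ _ _
  have hz_eq : ∀ i : ℤ, i ≤ j2 → z i = y i := by
    intro i hi
    show y (j2 + (i - j2) % s) = y i
    set e : ℤ := (i - j2) % s with hedef
    have he0 : 0 ≤ e := Int.emod_nonneg _ (by omega)
    have hes : e < s := Int.emod_lt_of_pos _ hs
    set D : ℤ := j2 + e - i with hDdef
    have hD0 : 0 ≤ D := by omega
    have hDdvd : s ∣ D := by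
      have h1 : D % s = (e - (i - j2)) % s := by congr 1; omega
      have h2 : (e - (i - j2)) % s = (e % s - (i - j2) % s) % s := by rw [Int.sub_emod]
      have h3 : e % s = e := Int.emod_emod_of_dvd _ (dvd_refl s)
      have : D % s = 0 := by rw [h1, h2, h3, ← hedef]; simp
      exact Int.dvd_of_emod_eq_zero this
    set n : ℕ := (D / s).toNat with hndef
    have hn : (n : ℤ) * s = D := by
      have h1 : (0:ℤ) ≤ D / s := Int.ediv_nonneg hD0 (le_of_lt hs)
      have h2 : ((D / s).toNat : ℤ) = D / s := Int.toNat_of_nonneg h1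
      rw [hndef, h2]
      exact Int.ediv_mul_cancel hDdvd
    have harg : j2 + e = i + (n:ℤ) * s := by rw [hn]; omega
    have hle : i + (n:ℤ) * s ≤ j1 := by
      rw [← harg]; omega
    calc y (j2 + e) = y (i + (n:ℤ)*s) := by rw [harg]
    _ = y i := hup n i hle
  -- z is fixed by G^[p]
  have hdownper : ∀ (f : ℤ → A), (∀ i, f (i + s) = f i) → ∀ (n : ℕ) (i : ℤ), f (i - n * s) = f i := by
    intro f hf n
    induction n with
    | zero => intro i; norm_num
    | succ n ih =>
        intro i
        have e1 : i - ((n+1:ℕ):ℤ) * s = (i - (n:ℕ)*s) - s := by push_cast; ring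
        have := hf ((i - (n:ℕ)*s) - s)
        have e2 : (i - (n:ℕ)*s) - s + s = i - (n:ℕ)*s := by ring
        rw [e2] at this
        rw [e1, ← this]
        exact ih i
  have hGzper : ∀ i, (G^[p] z) (i + s) = (G^[p] z) i := by
    intro i
    apply hGdep
    intro t _ _
    have := hzper (i + t)
    calc z (i + s + t) = z ((i + t) + s) := by congr 1; ring
    _ = z (i + t) := this
  have hGzbase : ∀ i : ℤ, i + (B:ℤ) ≤ j2 → (G^[p] z) i = z i := by
    intro i hi
    have h1 : (G^[p] z) i = (G^[p] y) i := by
      apply hGdep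
      intro t ht1 ht2
      have hBB : ((B:ℕ):ℤ) = (p:ℤ)*(2*(r:ℤ)+1) := by push_cast [hBdef]; ring
      have : i + t ≤ j2 := by omega
      rw [hz_eq _ this]
    have h2 : (G^[p] y) i = y i := by rw [hGp]
    have h3 : z i = y i := hz_eq i (by omega)
    rw [h1, h2, h3]
  have hGz : G^[p] z = z := by
    funext i
    set n : ℕ := (i - (j2 - (B:ℤ))).toNat with hndef
    have hn1 : i - (j2 - (B:ℤ)) ≤ (n:ℤ) := Int.self_le_toNat _
    have hn2 : (n:ℤ) ≤ (n:ℤ) * s := by nlinarith [Int.natCast_nonneg n, hs]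
    have hle : (i - (n:ℤ)*s) + (B:ℤ) ≤ j2 := by omega
    have e1 : (G^[p] z) (i - (n:ℤ)*s) = (G^[p] z) i := hdownper _ hGzper n i
    have e2 : z (i - (n:ℤ)*s) = z i := hdownper _ hzper n i
    rw [← e1, ← e2]
    exact hGzbase _ hle
  -- z is shift-periodic
  have hzshift : shift^[s.toNat] z = z := by
    funext i
    rw [shift_iter_apply]
    have : (s.toNat : ℤ) = s := Int.toNat_of_nonneg (le_of_lt hs)
    rw [this]
    exact hzper i
  -- conclude F-periodicity of z
  have hFS : ∀ (a b : ℕ) (x : Config A), F^[a] (shift^[b] x) = shift^[b] (F^[a] x) := by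
    intro a b x
    have hc : Function.Commute F shift := fun x => congrFun hFs x
    exact ((hc.iterate_left a).iterate_right b) x
  have hGiter : ∀ (n : ℕ) (x : Config A), G^[n] x = shift^[(r+1)*n] (F^[n] x) := by
    intro n
    induction n with
    | zero => intro x; simp
    | succ n ih =>
        intro x
        rw [Function.iterate_succ_apply, ih]
        show shift^[(r+1)*n] (F^[n] (shift^[r+1] (F x))) = shift^[(r+1)*(n+1)] (F^[n+1] x)
        rw [hFS n (r+1) (F x)]
        have e : (r+1)*(n+1) = (r+1)*n + (r+1) := by ring
        conv_rhs => rw [Function.iterate_succ_apply F n x, e, Function.iterate_add_apply]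
  set q : ℕ := p * s.toNat with hqdef
  have hq : 0 < q := by
    have h0 : 0 < s.toNat := by omega
    exact Nat.mul_pos hp h0
  have hFz : F^[q] z = z := by
    have h1 : G^[q] z = z := by
      rw [hqdef, Function.iterate_mul]
      exact Function.iterate_fixed hGz s.toNat
    have h2 : G^[q] z = shift^[(r+1)*q] (F^[q] z) := hGiter q z
    have h3 : shift^[(r+1)*q] z = z := by
      have e : (r+1)*q = s.toNat * ((r+1)*p) := by rw [hqdef]; ring
      rw [e, Function.iterate_mul]
      exact Function.iterate_fixed hzshift _
    have h4 : shift^[(r+1)*q] (F^[q] z) = shift^[(r+1)*q] z := by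
      rw [← h2, h1, h3]
    have hinj : Function.Injective (shift^[(r+1)*q] : Config A → Config A) :=
      shift_injective.iterate _
    exact hinj h4
  refine ⟨z, hS ?_, q, hq, hFz⟩
  intro i hi
  have h1 : z i = y i := hz_eq i (le_trans (hSK i hi) (by omega))
  rw [h1]
  exact hyCyl i hi
end
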